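/- arXiv:1412.4866 — 6 statements merged into one kernel-verified Lean document; each statement's English description precedes it below -/
import Mathlib

section
/- Let K be a simplicial complex on the vertex set [m] = {1,…,m}. If the Alexander dual K^∨ of K is shellable, then for every nonempty subset I ⊆ [m] the full subcomplex K_I := {σ ∈ K : σ ⊆ I} is fillable. -/
open Finset

/-- A simplicial complex: a collection of subsets of the vertex set, closed under
taking subsets and containing the empty set. -/
def IsComplex {V : Type*} (K : Set (Finset V)) : Prop :=
  ∅ ∈ K ∧ ∀ σ ∈ K, ∀ τ ⊆ σ, τ ∈ K

/-- `M` is a minimal non-face of `K`. -/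
def IsMinNonFace {V : Type*} [DecidableEq V] (K : Set (Finset V)) (M : Finset V) : Prop :=
  M ∉ K ∧ ∀ v ∈ M, M.erase v ∈ K

/-- `F` is a facet (maximal face) of `K`. -/
def IsFacet {V : Type*} (K : Set (Finset V)) (F : Finset V) : Prop :=
  F ∈ K ∧ ∀ G ∈ K, F ⊆ G → F = G

/-- `L` is a shelling of `K`: a duplicate-free enumeration of all facets of `K` such that
for each `k ≥ 2` (here `k ≥ 1` in 0-indexed form), the collection
`{σ ⊆ F_k : σ ⊆ F_j for some j < k}` is nonempty and each of its maximal elements has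
cardinality `|F_k| - 1`. -/
def IsShelling {V : Type*} (K : Set (Finset V)) (L : List (Finset V)) : Prop :=
  L.Nodup ∧ (∀ F, F ∈ L ↔ IsFacet K F) ∧
    ∀ k : Fin L.length, 1 ≤ (k : ℕ) →
      (∃ σ : Finset V, σ ⊆ L.get k ∧ ∃ j : Fin L.length, (j : ℕ) < (k : ℕ) ∧ σ ⊆ L.get j) ∧
      ∀ σ : Finset V,
        (σ ⊆ L.get k ∧ ∃ j : Fin L.length, (j : ℕ) < (k : ℕ) ∧ σ ⊆ L.get j) →
        (∀ ρ : Finset V,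
          (ρ ⊆ L.get k ∧ ∃ j : Fin L.length, (j : ℕ) < (k : ℕ) ∧ ρ ⊆ L.get j) →
            σ ⊆ ρ → σ = ρ) →
        σ.card + 1 = (L.get k).card

/-- A (possibly void) simplicial complex is shellable if it admits a shelling. -/
def Shellable {V : Type*} (K : Set (Finset V)) : Prop :=
  ∃ L, IsShelling K L

/-- The Alexander dual of `K` with respect to the full vertex set `[m]`. -/
def alexDual {m : ℕ} (K : Set (Finset (Fin m))) : Set (Finset (Fin m)) :=
  {σ | Finset.univ \ σ ∉ K}

/-- The geometric realization of `L` inside `ℝ^m`: the union over the nonempty faces `σ`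
of the convex hull of the standard basis vectors indexed by `σ`. -/
def geomReal {m : ℕ} (L : Set (Finset (Fin m))) : Set (Fin m → ℝ) :=
  ⋃ σ ∈ {σ : Finset (Fin m) | σ ∈ L ∧ σ ≠ ∅},
    convexHull ℝ ((fun i => Pi.single i (1 : ℝ)) '' (σ : Set (Fin m)))

/-- `K` is fillable: there are finitely many (possibly zero) distinct minimal non-faces
`M_1, …, M_r` of `K` such that `|K ∪ {M_1, …, M_r}|` is contractible. -/
def Fillable {m : ℕ} (K : Set (Finset (Fin m))) : Prop :=
  ∃ M : Finset (Finset (Fin m)),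
    (∀ N ∈ M, IsMinNonFace K N) ∧ ContractibleSpace ↥(geomReal (K ∪ ↑M))

/-!
List the minimal non-faces of `K` as the complements `G₁, …, Gₜ` of the facets of a shelling of
`K^∨`. Dually, the shelling condition says that every earlier `Gⱼ` contains a vertex `v` such that
`Gₖ ∪ {v}` contains an earlier `Gᵢ`.

Starting from the full simplex on `I`, forbid the `Gₖ` one at a time. Forbidding `A = Gₖ`
removes exactly the faces between `A` and `B`, the vertex set of the star of `A`; the shelling
condition shows that every subset of `B` is still a face. If `B = A`, only the face `A` is lost,
and `A` is kept as one of the filling minimal non-faces. Otherwise the removal is an elementary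
collapse, realised by the straight-line deformation that pushes the mass `min_{a ∈ A} x a` from the
vertices of `A` onto a vertex `w ∈ B \ A`. Either way contractibility is preserved.
-/

section Complex

variable {V : Type*} [DecidableEq V] {K : Set (Finset V)}

lemma mem_iff_forall_isMinNonFace_not_subset (hK : IsLowerSet K) (σ : Finset V) :
    σ ∈ K ↔ ∀ M, IsMinNonFace K M → ¬ M ⊆ σ := by
  refine ⟨fun hσ M hM hMσ => hM.1 (hK hMσ hσ), fun h => by_contra fun hσ => ?_⟩
  obtain ⟨M, hMσ, hM⟩ := exists_minimal_le_of_wellFoundedLT (· ∉ K) σ hσ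
  refine h M ⟨hM.prop, fun v hv => by_contra fun hv' => ?_⟩ hMσ
  exact M.notMem_erase v (hM.2 hv' (M.erase_subset v) hv)

lemma IsMinNonFace.fullSubcomplex {N I : Finset V} (hN : IsMinNonFace K N) (hNI : N ⊆ I) :
    IsMinNonFace {σ ∈ K | σ ⊆ I} N :=
  ⟨fun h => hN.1 h.1, fun v hv => ⟨hN.2 v hv, (N.erase_subset v).trans hNI⟩⟩

end Complex

section Avoiding

variable {V : Type*}

def avoiding (G : List (Finset V)) (I : Finset V) : Set (Finset V) :=
  {σ | σ ⊆ I ∧ ∀ g ∈ G, ¬ g ⊆ σ}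

lemma isLowerSet_avoiding (G : List (Finset V)) (I : Finset V) : IsLowerSet (avoiding G I) :=
  fun _ _ hτσ hσ => ⟨hτσ.trans hσ.1, fun g hg hgτ => hσ.2 g hg (hgτ.trans hτσ)⟩

lemma avoiding_nil (I : Finset V) : avoiding [] I = {σ | σ ⊆ I} := by
  simp [avoiding]

lemma avoiding_append_singleton (G : List (Finset V)) (A I : Finset V) :
    avoiding (G ++ [A]) I = {σ ∈ avoiding G I | ¬ A ⊆ σ} := by
  ext σ
  simp [avoiding, or_imp, forall_and, and_assoc]

lemma avoiding_append_union {G : List (Finset V)} {A I : Finset V} {S : Finset (Finset V)}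
    (hS : ∀ N ∈ S, ¬ A ⊆ N) :
    avoiding (G ++ [A]) I ∪ ↑S = {σ ∈ avoiding G I ∪ ↑S | ¬ A ⊆ σ} := by
  ext σ
  simp only [avoiding_append_singleton, Set.mem_union, Set.mem_ofPred_eq, Finset.mem_coe]
  exact ⟨fun h => h.elim (fun h => ⟨Or.inl h.1, h.2⟩) fun h => ⟨Or.inr h, hS σ h⟩,
    fun ⟨h, hAσ⟩ => h.imp (fun h => ⟨h, hAσ⟩) id⟩

lemma isLowerSet_avoiding_union {G : List (Finset V)} {I : Finset V} {S : Finset (Finset V)}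
    (hG : G.Pairwise (IncompRel (· ⊆ ·))) (hS : ∀ N ∈ S, N ∈ G ∧ N ⊆ I) :
    IsLowerSet (avoiding G I ∪ ↑S) := by
  rintro σ τ hτσ (hσ | hσ)
  · exact Or.inl (isLowerSet_avoiding G I hτσ hσ)
  by_cases hτ : τ = σ
  · exact Or.inr (hτ ▸ hσ)
  refine Or.inl ⟨hτσ.trans (hS σ hσ).2, fun g hg hgτ => ?_⟩
  have hgσ : g ⊂ σ := hgτ.trans_ssubset (Finset.ssubset_iff_subset_ne.2 ⟨hτσ, hτ⟩)
  exact (hG.forall hg (hS σ hσ).1 hgσ.ne).1 hgσ.subset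

lemma mem_avoiding_of_forall_insert_mem [DecidableEq V] {G : List (Finset V)} {A I : Finset V}
    (hshell : ∀ g ∈ G, ∃ v ∈ g, ∃ h ∈ G, h ⊆ insert v A) {σ : Finset V}
    (hσ : ∀ v ∈ σ, insert v A ∈ avoiding G I) : σ ∈ avoiding G I := by
  refine ⟨fun v hv => (hσ v hv).1 (Finset.mem_insert_self v A), fun g hg hgσ => ?_⟩
  obtain ⟨v, hv, h, hh, hhv⟩ := hshell g hg
  exact (hσ v (hgσ hv)).2 h hh hhv

def IsDualShellingOrder [DecidableEq V] (G : List (Finset V)) : Prop :=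
  ∀ (G' : List (Finset V)) (A : Finset V), G' ++ [A] <+: G →
    ∀ g ∈ G', ∃ v ∈ g, ∃ h ∈ G', h ⊆ insert v A

end Avoiding

section Shelling

variable {V : Type*} {K : Set (Finset V)}

theorem IsShelling.pairwise_incompRel {L : List (Finset V)} (hL : IsShelling K L) :
    L.Pairwise (IncompRel (· ⊆ ·)) :=
  hL.1.imp_of_mem fun hF hF' hne =>
    ⟨fun h => hne (((hL.2.1 _).1 hF).2 _ ((hL.2.1 _).1 hF').1 h),
      fun h => hne ((hL.2.1 _).1 hF' |>.2 _ ((hL.2.1 _).1 hF).1 h).symm⟩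

variable [DecidableEq V]

theorem IsShelling.exists_erase_subset {L L' : List (Finset V)} {F F' : Finset V}
    (hL : IsShelling K L) (hpre : L' ++ [F] <+: L) (hF' : F' ∈ L') :
    ∃ v ∈ F \ F', ∃ F'' ∈ L', F.erase v ⊆ F'' := by
  obtain ⟨t, rfl⟩ := hpre
  set k : Fin (L' ++ [F] ++ t).length := ⟨L'.length, by simp⟩
  have hk : (L' ++ [F] ++ t).get k = F := by simp [k]
  have hearlier (ρ : Finset V) : (∃ j : Fin (L' ++ [F] ++ t).length, (j : ℕ) < k ∧
      ρ ⊆ (L' ++ [F] ++ t).get j) ↔ ∃ F'' ∈ L', ρ ⊆ F'' := by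
    constructor
    · rintro ⟨j, hj, hρ⟩
      refine ⟨L'[(j : ℕ)], List.getElem_mem hj, ?_⟩
      simpa [List.getElem_append_left hj] using hρ
    · rintro ⟨F'', hF'', hρ⟩
      obtain ⟨j, hj, rfl⟩ := List.mem_iff_getElem.1 hF''
      exact ⟨⟨j, by simp; omega⟩, hj, by simpa [List.getElem_append_left hj] using hρ⟩
  -- A maximal face of `F` that lies in an earlier facet and contains `F ∩ F'` is some `F.erase v`.
  set P : Finset V → Prop := fun ρ => ρ ⊆ F ∧ ∃ F'' ∈ L', ρ ⊆ F''
  have hPfin : {ρ | P ρ}.Finite :=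
    F.powerset.finite_toSet.subset fun ρ hρ => Finset.mem_powerset.2 hρ.1
  obtain ⟨τ, hFτ, hτ⟩ := hPfin.exists_le_maximal
    (show P (F ∩ F') from ⟨Finset.inter_subset_left, F', hF', Finset.inter_subset_right⟩)
  have hcard : τ.card + 1 = F.card := by
    have hk1 : 1 ≤ (k : ℕ) := List.length_pos_of_mem hF'
    have hshell := (hL.2.2 k hk1).2 τ
    simp only [hk, hearlier] at hshell
    exact hshell hτ.prop fun ρ hρ hτρ => le_antisymm hτρ (hτ.2 hρ hτρ)
  obtain ⟨v, hvF, hvτ⟩ := Finset.exists_of_ssubset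
    (Finset.ssubset_iff_subset_ne.2 ⟨hτ.prop.1, by rintro rfl; omega⟩)
  have hτ_eq : τ = F.erase v := Finset.eq_of_subset_of_card_le
    (Finset.subset_erase.2 ⟨hτ.prop.1, hvτ⟩) (by rw [Finset.card_erase_of_mem hvF]; omega)
  obtain ⟨F'', hF'', hτF''⟩ := hτ.prop.2
  exact ⟨v, Finset.mem_sdiff.2 ⟨hvF, fun hvF' => hvτ (hFτ (Finset.mem_inter.2 ⟨hvF, hvF'⟩))⟩,
    F'', hF'', hτ_eq ▸ hτF''⟩

theorem IsShelling.isDualShellingOrder_map_compl [Fintype V] {L : List (Finset V)}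
    (hL : IsShelling K L) : IsDualShellingOrder (L.map compl) := by
  intro G' A hpre g hg
  obtain ⟨l, hl, hl'⟩ := List.prefix_map_iff.1 hpre
  obtain ⟨L', l₂, rfl, rfl, hA⟩ := List.map_eq_append_iff.1 hl'.symm
  obtain ⟨F, rfl, rfl⟩ := List.map_eq_singleton_iff.1 hA
  obtain ⟨F', hF', rfl⟩ := List.mem_map.1 hg
  obtain ⟨v, hv, F'', hF'', hsub⟩ := hL.exists_erase_subset hl hF'
  refine ⟨v, Finset.mem_compl.2 (Finset.mem_sdiff.1 hv).2, F''ᶜ, List.mem_map_of_mem hF'', ?_⟩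
  rwa [← Finset.compl_erase, Finset.compl_subset_compl]

end Shelling

theorem ContractibleSpace.of_retraction_along_segments {E : Type*} [TopologicalSpace E]
    [AddCommGroup E] [Module ℝ E] [ContinuousAdd E] [ContinuousSMul ℝ E] {X Y : Set E}
    (hYX : Y ⊆ X) {r : E → E} (hr : Continuous r) (hrX : Set.MapsTo r X Y)
    (hrY : ∀ y ∈ Y, r y = y) (hseg : ∀ x ∈ X, segment ℝ x (r x) ⊆ X) [ContractibleSpace X] :
    ContractibleSpace Y := by
  let incl : C(Y, X) := ⟨Set.inclusion hYX, continuous_inclusion hYX⟩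
  let ret : C(X, Y) := ⟨hrX.restrict, hr.restrict hrX⟩
  refine ContinuousMap.HomotopyEquiv.contractibleSpace (Y := X) ⟨incl, ret, ?_, ?_⟩
  · have : ret.comp incl = ContinuousMap.id Y := by
      ext y
      exact hrY y y.2
    rw [this]
  · have hmem (p : unitInterval × X) : (1 - (p.1 : ℝ)) • r p.2 + (p.1 : ℝ) • p.2 ∈ X :=
      hseg p.2 p.2.2 ⟨p.1, 1 - p.1, p.1.2.1, by linarith [p.1.2.2], by ring, add_comm _ _⟩
    refine ⟨⟨⟨fun p => ⟨_, hmem p⟩, by fun_prop⟩, ?_, ?_⟩⟩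
    all_goals intro x; ext1; simp [incl, ret]

section

variable {m : ℕ}

def coordSimplex (σ : Finset (Fin m)) : Set (Fin m → ℝ) :=
  convexHull ℝ ((fun i => Pi.single i (1 : ℝ)) '' (σ : Set (Fin m)))

lemma mem_coordSimplex {σ : Finset (Fin m)} {x : Fin m → ℝ} :
    x ∈ coordSimplex σ ↔ x ∈ stdSimplex ℝ (Fin m) ∧ ∀ i ∉ σ, x i = 0 := by
  constructor
  · refine fun hx => (convexHull_min (t := stdSimplex ℝ _ ∩ {y | ∀ i ∉ σ, y i = 0}) ?_
      ((convex_stdSimplex ℝ _).inter ?_) hx :)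
    · rintro _ ⟨i, hi, rfl⟩
      refine ⟨⟨fun j => ?_, by simp⟩, fun j hj => ?_⟩
      · by_cases h : j = i <;> simp [h]
      · simp [show j ≠ i by rintro rfl; exact hj hi]
    · intro y hy z hz a b _ _ _ i hi
      simp [hy i hi, hz i hi]
  · rintro ⟨⟨hx0, hx1⟩, hxσ⟩
    have hvanish : ∀ i ∈ Finset.univ, i ∉ σ → x i • Pi.single i (1 : ℝ) = 0 := by
      intro i _ hi
      simp [hxσ i hi]
    have hsum : ∑ i ∈ σ, x i = 1 := by
      rw [← hx1]
      exact Finset.sum_subset (Finset.subset_univ σ) fun i _ hi => hxσ i hi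
    rw [pi_eq_sum_univ' x, ← Finset.sum_subset (Finset.subset_univ σ) hvanish]
    exact (convex_convexHull ℝ _).sum_mem (fun i _ => hx0 i) hsum
      fun i hi => subset_convexHull ℝ _ ⟨i, hi, rfl⟩

lemma coordSimplex_mono {σ τ : Finset (Fin m)} (h : σ ⊆ τ) : coordSimplex σ ⊆ coordSimplex τ :=
  convexHull_mono (Set.image_mono (Finset.coe_subset.2 h))

lemma mem_geomReal {L : Set (Finset (Fin m))} {x : Fin m → ℝ} :
    x ∈ geomReal L ↔ ∃ σ ∈ L, x ∈ coordSimplex σ := by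
  simp only [geomReal, Set.mem_iUnion, Set.mem_ofPred_eq, exists_prop]
  constructor
  · rintro ⟨σ, ⟨hσ, -⟩, hx⟩
    exact ⟨σ, hσ, hx⟩
  · rintro ⟨σ, hσ, hx⟩
    refine ⟨σ, ⟨hσ, ?_⟩, hx⟩
    rintro rfl
    simp [coordSimplex] at hx

lemma geomReal_mono {L L' : Set (Finset (Fin m))} (h : L ⊆ L') : geomReal L ⊆ geomReal L' := by
  intro x hx
  obtain ⟨σ, hσ, hx⟩ := mem_geomReal.1 hx
  exact mem_geomReal.2 ⟨σ, h hσ, hx⟩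

lemma contractibleSpace_geomReal_powerset {I : Finset (Fin m)} (hI : I.Nonempty) :
    ContractibleSpace (geomReal {σ | σ ⊆ I}) := by
  have : geomReal {σ | σ ⊆ I} = coordSimplex I := by
    ext x
    refine ⟨fun hx => ?_, fun hx => mem_geomReal.2 ⟨I, Finset.Subset.refl I, hx⟩⟩
    obtain ⟨σ, hσ, hx⟩ := mem_geomReal.1 hx
    exact coordSimplex_mono hσ hx
  rw [this]
  exact (convex_convexHull ℝ _).contractibleSpace ((hI.to_set.image _).convexHull)

section Collapse

variable {A : Finset (Fin m)} (hA : A.Nonempty) (w : Fin m)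

/-- Moves the mass `min_{a ∈ A} x a` off every vertex of `A` onto the vertex `w`. -/
noncomputable def collapseMap (x : Fin m → ℝ) : Fin m → ℝ :=
  x + A.inf' hA x • (Pi.single w (A.card : ℝ) - ∑ a ∈ A, Pi.single a 1)

lemma collapseMap_apply (x : Fin m → ℝ) (i : Fin m) :
    collapseMap hA w x i =
      x i + A.inf' hA x * ((if i = w then (A.card : ℝ) else 0) - if i ∈ A then 1 else 0) := by
  simp [collapseMap, Pi.single_apply, Finset.sum_apply]

lemma continuous_collapseMap : Continuous (collapseMap hA w) := by
  have : Continuous fun x : Fin m → ℝ => A.inf' hA x :=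
    Continuous.finset_inf'_apply hA fun i _ => continuous_apply i
  unfold collapseMap
  fun_prop

lemma collapseMap_eq_self {σ : Finset (Fin m)} {x : Fin m → ℝ} (hx : x ∈ coordSimplex σ)
    (hAσ : ¬ A ⊆ σ) : collapseMap hA w x = x := by
  obtain ⟨⟨hx0, -⟩, hxσ⟩ := mem_coordSimplex.1 hx
  obtain ⟨a, haA, haσ⟩ := Finset.not_subset.1 hAσ
  have : A.inf' hA x = 0 :=
    le_antisymm (hxσ a haσ ▸ A.inf'_le x haA) (A.le_inf' hA x fun i _ => hx0 i)
  simp [collapseMap, this]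

lemma collapseMap_mem_coordSimplex_erase {B : Finset (Fin m)} (hAB : A ⊆ B) (hwB : w ∈ B)
    (hwA : w ∉ A) {x : Fin m → ℝ} (hx : x ∈ coordSimplex B) :
    ∃ a ∈ A, collapseMap hA w x ∈ coordSimplex (B.erase a) := by
  obtain ⟨⟨hx0, hx1⟩, hxB⟩ := mem_coordSimplex.1 hx
  obtain ⟨a, haA, hxa⟩ := A.exists_mem_eq_inf' hA x
  have hμ0 : 0 ≤ A.inf' hA x := A.le_inf' hA x fun i _ => hx0 i
  refine ⟨a, haA, mem_coordSimplex.2 ⟨⟨fun i => ?_, ?_⟩, fun i hi => ?_⟩⟩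
  · rw [collapseMap_apply]
    by_cases hiw : i = w
    · subst hiw
      simp only [if_neg hwA, sub_zero]
      exact add_nonneg (hx0 i) (mul_nonneg hμ0 (Nat.cast_nonneg _))
    · by_cases hiA : i ∈ A
      · simp only [if_neg hiw, if_pos hiA]
        linarith [A.inf'_le x hiA]
      · simp [if_neg hiw, if_neg hiA, hx0 i]
  · simp only [collapseMap_apply, Finset.sum_add_distrib, ← Finset.mul_sum, Finset.sum_sub_distrib,
      Finset.sum_ite_eq', Finset.mem_univ, if_true, Finset.sum_ite_mem, Finset.univ_inter,
      Finset.sum_const, nsmul_eq_mul, mul_one, hx1, sub_self, mul_zero, add_zero]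
  · rw [collapseMap_apply]
    rcases eq_or_ne i a with rfl | hia
    · simp [if_neg (show i ≠ w by rintro rfl; exact hwA haA), haA, hxa]
    · have hiB : i ∉ B := fun h => hi (Finset.mem_erase.2 ⟨hia, h⟩)
      have hiA : i ∉ A := fun h => hiB (hAB h)
      simp [hxB i hiB, show i ≠ w by rintro rfl; exact hiB hwB, hiA]

end Collapse

theorem contractibleSpace_geomReal_collapse {L : Set (Finset (Fin m))} (hL : IsLowerSet L)
    {A B : Finset (Fin m)} (hA : A.Nonempty) (hB : B ∈ L) (hstar : ∀ σ ∈ L, A ⊆ σ → σ ⊆ B)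
    {w : Fin m} (hwB : w ∈ B) (hwA : w ∉ A) [ContractibleSpace (geomReal L)] :
    ContractibleSpace (geomReal {σ ∈ L | ¬ A ⊆ σ}) := by
  have hcollapse {σ : Finset (Fin m)} (hσ : σ ∈ L) (hAσ : A ⊆ σ) {x : Fin m → ℝ}
      (hx : x ∈ coordSimplex σ) :
      ∃ a ∈ A, collapseMap hA w x ∈ coordSimplex (B.erase a) :=
    collapseMap_mem_coordSimplex_erase hA w (hAσ.trans (hstar σ hσ hAσ)) hwB hwA
      (coordSimplex_mono (hstar σ hσ hAσ) hx)
  refine ContractibleSpace.of_retraction_along_segments (geomReal_mono fun σ hσ => hσ.1)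
    (continuous_collapseMap hA w) (fun x hx => ?_) (fun y hy => ?_) (fun x hx => ?_)
  · obtain ⟨σ, hσ, hxσ⟩ := mem_geomReal.1 hx
    by_cases hAσ : A ⊆ σ
    · obtain ⟨a, ha, hmem⟩ := hcollapse hσ hAσ hxσ
      exact mem_geomReal.2
        ⟨B.erase a, ⟨hL (B.erase_subset a) hB, fun h => B.notMem_erase a (h ha)⟩, hmem⟩
    · rw [collapseMap_eq_self hA w hxσ hAσ]
      exact mem_geomReal.2 ⟨σ, ⟨hσ, hAσ⟩, hxσ⟩
  · obtain ⟨σ, hσ, hyσ⟩ := mem_geomReal.1 hy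
    exact collapseMap_eq_self hA w hyσ hσ.2
  · obtain ⟨σ, hσ, hxσ⟩ := mem_geomReal.1 hx
    by_cases hAσ : A ⊆ σ
    · obtain ⟨a, -, hmem⟩ := hcollapse hσ hAσ hxσ
      refine ((convex_convexHull ℝ _).segment_subset (coordSimplex_mono (hstar σ hσ hAσ) hxσ)
        (coordSimplex_mono (B.erase_subset a) hmem)).trans fun y hy => mem_geomReal.2 ⟨B, hB, hy⟩
    · rw [collapseMap_eq_self hA w hxσ hAσ, segment_same]
      exact Set.singleton_subset_iff.2 hx

theorem contractibleSpace_geomReal_sep_or_eq_insert {L : Set (Finset (Fin m))}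
    (hL : IsLowerSet L) {A B : Finset (Fin m)} (hA : A.Nonempty) (hAB : A ⊆ B) (hB : B ∈ L)
    (hstar : ∀ σ ∈ L, A ⊆ σ → σ ⊆ B) [ContractibleSpace (geomReal L)] :
    ContractibleSpace (geomReal {σ ∈ L | ¬ A ⊆ σ}) ∨ L = insert A {σ ∈ L | ¬ A ⊆ σ} := by
  by_cases hBA : B ⊆ A
  · refine Or.inr (Set.ext fun σ => ⟨fun hσ => ?_, ?_⟩)
    · by_cases hAσ : A ⊆ σ
      · exact Or.inl ((hstar σ hσ hAσ).trans hBA |>.antisymm hAσ)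
      · exact Or.inr ⟨hσ, hAσ⟩
    · rintro (rfl | hσ)
      exacts [hL hAB hB, hσ.1]
  · obtain ⟨w, hwB, hwA⟩ := Finset.not_subset.1 hBA
    exact Or.inl (contractibleSpace_geomReal_collapse hL hA hB hstar hwB hwA)

lemma exists_contractible_avoiding_append {G : List (Finset (Fin m))} {A I : Finset (Fin m)}
    (hA : A.Nonempty) (hG : (G ++ [A]).Pairwise (IncompRel (· ⊆ ·)))
    (hshell : ∀ g ∈ G, ∃ v ∈ g, ∃ h ∈ G, h ⊆ insert v A)
    {S : Finset (Finset (Fin m))} (hS : ∀ N ∈ S, N ∈ G ∧ N ⊆ I)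
    [ContractibleSpace (geomReal (avoiding G I ∪ ↑S))] :
    ∃ S' : Finset (Finset (Fin m)), (∀ N ∈ S', N ∈ G ++ [A] ∧ N ⊆ I) ∧
      ContractibleSpace (geomReal (avoiding (G ++ [A]) I ∪ ↑S')) := by
  classical
  obtain ⟨hGpw, -, hGA⟩ := List.pairwise_append.1 hG
  set L := avoiding G I ∪ ↑S
  have hS' : ∀ N ∈ S, N ∈ G ++ [A] ∧ N ⊆ I :=
    fun N hN => ⟨List.mem_append_left _ (hS N hN).1, (hS N hN).2⟩
  have hSA : ∀ N ∈ S, ¬ A ⊆ N := fun N hN => (hGA N (hS N hN).1 A (List.mem_singleton_self A)).2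
  have hnew : avoiding (G ++ [A]) I ∪ ↑S = {σ ∈ L | ¬ A ⊆ σ} := avoiding_append_union hSA
  have hstar : ∀ σ ∈ L, A ⊆ σ → σ ∈ avoiding G I := by
    rintro σ (hσ | hσ) hAσ
    · exact hσ
    · exact absurd hAσ (hSA σ hσ)
  by_cases hAL : A ∈ avoiding G I
  swap
  · refine ⟨S, hS', ?_⟩
    rwa [hnew, Set.sep_eq_self_iff_mem_true.2 fun σ hσ hAσ =>
      hAL (isLowerSet_avoiding G I hAσ (hstar σ hσ hAσ))]
  -- the vertices of the closed star of `A` in `avoiding G I`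
  set B := I.filter fun v => insert v A ∈ avoiding G I
  have hAB : A ⊆ B := fun v hv =>
    Finset.mem_filter.2 ⟨hAL.1 hv, (Finset.insert_eq_of_mem hv).symm ▸ hAL⟩
  have hBL : B ∈ L := Or.inl <| mem_avoiding_of_forall_insert_mem hshell fun v hv =>
    (Finset.mem_filter.1 hv).2
  have hBstar : ∀ σ ∈ L, A ⊆ σ → σ ⊆ B := fun σ hσ hAσ v hv => Finset.mem_filter.2
    ⟨(hstar σ hσ hAσ).1 hv,
      isLowerSet_avoiding G I (Finset.insert_subset hv hAσ) (hstar σ hσ hAσ)⟩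
  rcases contractibleSpace_geomReal_sep_or_eq_insert (isLowerSet_avoiding_union hGpw hS) hA hAB
    hBL hBstar with hcontr | hL
  · exact ⟨S, hS', hnew ▸ hcontr⟩
  · refine ⟨insert A S, fun N hN => ?_, ?_⟩
    · rcases Finset.mem_insert.1 hN with rfl | hN
      · exact ⟨List.mem_append_right _ (List.mem_singleton_self N), hAL.1⟩
      · exact hS' N hN
    · rwa [Finset.coe_insert, Set.union_insert, hnew, ← hL]

theorem exists_contractible_avoiding_union {G : List (Finset (Fin m))} {I : Finset (Fin m)}
    (hI : I.Nonempty) (hne : ∀ g ∈ G, g.Nonempty) (hG : G.Pairwise (IncompRel (· ⊆ ·)))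
    (hshell : IsDualShellingOrder G) :
    ∃ S : Finset (Finset (Fin m)), (∀ N ∈ S, N ∈ G ∧ N ⊆ I) ∧
      ContractibleSpace (geomReal (avoiding G I ∪ ↑S)) := by
  induction G using List.reverseRecOn with
  | nil =>
    refine ⟨∅, by simp, ?_⟩
    rw [Finset.coe_empty, Set.union_empty, avoiding_nil]
    exact contractibleSpace_geomReal_powerset hI
  | append_singleton G A ih =>
    obtain ⟨S, hS, hcontr⟩ := ih (fun g hg => hne g (List.mem_append_left _ hg))
      (hG.sublist (List.sublist_append_left G [A]))
      fun G' A' hpre => hshell G' A' (hpre.trans (List.prefix_append G [A]))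
    have hA : A.Nonempty := hne A (List.mem_append_right _ (List.mem_singleton_self A))
    exact exists_contractible_avoiding_append hA hG (hshell G A List.prefix_rfl) hS

lemma isFacet_alexDual_iff {K : Set (Finset (Fin m))} (hK : IsLowerSet K) {F : Finset (Fin m)} :
    IsFacet (alexDual K) F ↔ IsMinNonFace K Fᶜ := by
  have hdual (σ : Finset (Fin m)) : σ ∈ alexDual K ↔ σᶜ ∉ K := by
    simp [alexDual, Finset.compl_eq_univ_sdiff]
  constructor
  · rintro ⟨hF, hmax⟩
    refine ⟨(hdual F).1 hF, fun v hv => by_contra fun hvK => ?_⟩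
    rw [← Finset.compl_insert] at hvK
    have := hmax _ ((hdual _).2 hvK) (Finset.subset_insert v F)
    exact Finset.mem_compl.1 hv (this ▸ Finset.mem_insert_self v F)
  · rintro ⟨hFK, hmin⟩
    refine ⟨(hdual F).2 hFK, fun G hG hFG => by_contra fun hne => ?_⟩
    obtain ⟨v, hvG, hvF⟩ := Finset.exists_of_ssubset (Finset.ssubset_iff_subset_ne.2 ⟨hFG, hne⟩)
    refine (hdual G).1 hG (hK ?_ (hmin v (Finset.mem_compl.2 hvF)))
    rw [← Finset.compl_insert, Finset.compl_subset_compl]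
    exact Finset.insert_subset hvG hFG

end

/-- If the Alexander dual of `K` is shellable, then every full subcomplex
`K_I = {σ ∈ K : σ ⊆ I}`, for nonempty `I ⊆ [m]`, is fillable. -/
theorem fullSubcomplex_fillable_of_dual_shellable {m : ℕ} (K : Set (Finset (Fin m)))
    (hK : IsComplex K) (hshell : Shellable (alexDual K)) :
    ∀ I : Finset (Fin m), I.Nonempty → Fillable {σ ∈ K | σ ⊆ I} := by
  intro I hI
  obtain ⟨L, hL⟩ := hshell
  have hKlow : IsLowerSet K := fun σ τ hτσ hσ => hK.2 σ hσ τ hτσ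
  set G : List (Finset (Fin m)) := L.map compl
  have hG (M : Finset (Fin m)) : M ∈ G ↔ IsMinNonFace K M := by
    rw [← compl_compl M, ← isFacet_alexDual_iff hKlow, ← hL.2.1, compl_compl]
    simp [G]
  have hKI : {σ ∈ K | σ ⊆ I} = avoiding G I := by
    ext σ
    simp [avoiding, mem_iff_forall_isMinNonFace_not_subset hKlow, hG, and_comm]
  have hne (g : Finset (Fin m)) (hg : g ∈ G) : g.Nonempty :=
    Finset.nonempty_iff_ne_empty.2 fun h => ((hG g).1 hg).1 (h ▸ hK.1)
  have hpw : G.Pairwise (IncompRel (· ⊆ ·)) := List.pairwise_map.2 <|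
    hL.pairwise_incompRel.imp fun h => by
      simpa only [IncompRel, Finset.compl_subset_compl, and_comm] using h
  obtain ⟨S, hS, hcontr⟩ := exists_contractible_avoiding_union hI hne hpw
    hL.isDualShellingOrder_map_compl
  exact ⟨S, fun N hN => ((hG N).1 (hS N hN).1).fullSubcomplex (hS N hN).2, hKI ▸ hcontr⟩
end

section
/- Let L be a shellable simplicial complex and let v be a vertex of L (i.e. {v} ∈ L). Then the link lk_L(v) := {σ : v ∉ σ and σ ∪ {v} ∈ L} is shellable. -/
open Finset

/-!
A shelling of `lk_L(v)` is obtained from a shelling of `L` by keeping, in their order, the facets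
that contain `v` and deleting `v` from each. Adding `v` identifies the faces of the `k`-th new
facet that lie in an earlier new facet with the faces of the corresponding facet of `L` that
contain `v` and lie in an earlier facet. This correspondence preserves maximality and raises
cardinalities by one, so each shelling step of `L` at a facet through `v` yields one of the link.
-/

namespace List

variable {α : Type*}

theorem exists_lt_get_iff_exists_mem_take {l : List α} (k : Fin l.length) (P : α → Prop) :
    (∃ j : Fin l.length, (j : ℕ) < k ∧ P (l.get j)) ↔ ∃ x ∈ l.take k, P x := by
  simp only [mem_take_iff_getElem]
  constructor
  · rintro ⟨j, hjk, hj⟩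
    exact ⟨_, ⟨j, by omega, rfl⟩, hj⟩
  · rintro ⟨_, ⟨j, hj, rfl⟩, hP⟩
    exact ⟨⟨j, by omega⟩, by simp only; omega, hP⟩

theorem forall_take_get_iff_forall_eq_append_cons {l : List α} (P : List α → α → Prop) :
    (∀ k : Fin l.length, 1 ≤ (k : ℕ) → P (l.take k) (l.get k)) ↔
      ∀ a x b, l = a ++ x :: b → a ≠ [] → P a x := by
  constructor
  · rintro h a x b rfl ha
    have hlen : a.length < (a ++ x :: b).length := by simp
    simpa [take_left] using h ⟨a.length, hlen⟩ (length_pos_iff.2 ha)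
  · intro h k hk
    refine h _ _ (l.drop (k + 1)) ?_ ?_
    · simp
    · exact ne_nil_of_length_pos (by simp; omega)

theorem exists_eq_append_cons_of_filter_eq {l a b : List α} {x : α} {p : α → Bool}
    (h : l.filter p = a ++ x :: b) :
    ∃ a₀ b₀, l = a₀ ++ x :: b₀ ∧ p x ∧ a₀.filter p = a := by
  obtain ⟨l₁, l₂, rfl, rfl, h₂⟩ := filter_eq_append_iff.1 h
  obtain ⟨m₁, m₂, rfl, hm₁, hx, -⟩ := filter_eq_cons_iff.1 h₂
  refine ⟨l₁ ++ m₁, m₂, by simp, hx, ?_⟩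
  simp [filter_eq_nil_iff.2 hm₁]

end List

section Shelling

variable {V : Type*}

def overlap (prev : List (Finset V)) (F : Finset V) : Set (Finset V) :=
  {σ | σ ⊆ F ∧ ∃ G ∈ prev, σ ⊆ G}

def IsShellingStep (prev : List (Finset V)) (F : Finset V) : Prop :=
  (overlap prev F).Nonempty ∧ ∀ σ, Maximal (· ∈ overlap prev F) σ → σ.card + 1 = F.card

theorem isShellingStep_take_get_iff (l : List (Finset V)) (k : Fin l.length) :
    IsShellingStep (l.take k) (l.get k) ↔
      (∃ σ : Finset V,
        σ ⊆ l.get k ∧ ∃ j : Fin l.length, (j : ℕ) < k ∧ σ ⊆ l.get j) ∧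
      ∀ σ : Finset V,
        (σ ⊆ l.get k ∧ ∃ j : Fin l.length, (j : ℕ) < k ∧ σ ⊆ l.get j) →
        (∀ ρ : Finset V,
          (ρ ⊆ l.get k ∧ ∃ j : Fin l.length, (j : ℕ) < k ∧ ρ ⊆ l.get j) →
            σ ⊆ ρ → σ = ρ) →
        σ.card + 1 = (l.get k).card := by
  have hmem (σ : Finset V) : σ ∈ overlap (l.take k) (l.get k) ↔
      σ ⊆ l.get k ∧ ∃ j : Fin l.length, (j : ℕ) < k ∧ σ ⊆ l.get j := by
    rw [List.exists_lt_get_iff_exists_mem_take k (σ ⊆ ·)]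
    rfl
  simp only [← hmem]
  refine and_congr Iff.rfl (forall_congr' fun σ => ⟨fun h hσ hmax => h ⟨hσ, ?_⟩, ?_⟩)
  · exact fun ρ hρ hσρ => (hmax ρ hρ hσρ).ge
  · exact fun h hσ => h hσ.1 fun ρ hρ hσρ => hσρ.antisymm (hσ.2 hρ hσρ)

theorem isShelling_iff {K : Set (Finset V)} {l : List (Finset V)} :
    IsShelling K l ↔ l.Nodup ∧ (∀ F, F ∈ l ↔ IsFacet K F) ∧
      ∀ a F b, l = a ++ F :: b → a ≠ [] → IsShellingStep a F := by
  simp only [IsShelling, ← isShellingStep_take_get_iff,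
    List.forall_take_get_iff_forall_eq_append_cons IsShellingStep]

end Shelling

section Link

variable {V : Type*} [DecidableEq V]

theorem subset_erase_iff_insert_subset {v : V} {σ G : Finset V} (hvσ : v ∉ σ) (hvG : v ∈ G) :
    σ ⊆ G.erase v ↔ insert v σ ⊆ G := by
  rw [subset_erase, insert_subset_iff]
  tauto

def link (K : Set (Finset V)) (v : V) : Set (Finset V) :=
  {σ | v ∉ σ ∧ σ ∪ {v} ∈ K}

theorem mem_link {K : Set (Finset V)} {v : V} {σ : Finset V} :
    σ ∈ link K v ↔ v ∉ σ ∧ insert v σ ∈ K := by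
  rw [link, Set.mem_ofPred_eq, union_singleton]

theorem erase_mem_link {K : Set (Finset V)} {v : V} {G : Finset V} (hG : G ∈ K) (hvG : v ∈ G) :
    G.erase v ∈ link K v :=
  mem_link.2 ⟨notMem_erase v G, by rwa [insert_erase hvG]⟩

theorem isFacet_link_iff {K : Set (Finset V)} {v : V} {σ : Finset V} :
    IsFacet (link K v) σ ↔ v ∉ σ ∧ IsFacet K (insert v σ) := by
  constructor
  · rintro ⟨hσ, hmax⟩
    obtain ⟨hvσ, hσK⟩ := mem_link.1 hσ
    refine ⟨hvσ, hσK, fun G hG hσG => ?_⟩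
    have hvG : v ∈ G := insert_subset_iff.1 hσG |>.1
    have : σ = G.erase v :=
      hmax _ (erase_mem_link hG hvG) ((subset_erase_iff_insert_subset hvσ hvG).2 hσG)
    rw [this, insert_erase hvG]
  · rintro ⟨hvσ, hσK, hmax⟩
    refine ⟨mem_link.2 ⟨hvσ, hσK⟩, fun τ hτ hστ => ?_⟩
    have := hmax _ (mem_link.1 hτ).2 (insert_subset_insert v hστ)
    rw [← erase_insert hvσ, this, erase_insert (mem_link.1 hτ).1]

def linkFacets (l : List (Finset V)) (v : V) : List (Finset V) :=
  (l.filter (v ∈ ·)).map (·.erase v)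

theorem mem_linkFacets {l : List (Finset V)} {v : V} {σ : Finset V} :
    σ ∈ linkFacets l v ↔ v ∉ σ ∧ insert v σ ∈ l := by
  simp only [linkFacets, List.mem_map, List.mem_filter, decide_eq_true_eq]
  constructor
  · rintro ⟨F, ⟨hF, hvF⟩, rfl⟩
    exact ⟨notMem_erase v F, by rwa [insert_erase hvF]⟩
  · rintro ⟨hvσ, hσ⟩
    exact ⟨_, ⟨hσ, mem_insert_self v σ⟩, erase_insert hvσ⟩

theorem List.Nodup.linkFacets {l : List (Finset V)} (hl : l.Nodup) (v : V) :
    (linkFacets l v).Nodup :=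
  (hl.filter _).map_on fun _ hF _ hG =>
    erase_injOn' v (by simpa using (List.mem_filter.1 hF).2)
      (by simpa using (List.mem_filter.1 hG).2)

theorem exists_eq_append_cons_of_linkFacets_eq {l a' b' : List (Finset V)} {v : V}
    {σ : Finset V} (h : linkFacets l v = a' ++ σ :: b') :
    ∃ a F b, l = a ++ F :: b ∧ v ∈ F ∧ F.erase v = σ ∧ linkFacets a v = a' := by
  obtain ⟨a₁, c, hfilter, rfl, hc⟩ := List.map_eq_append_iff.1 h
  obtain ⟨F, b₁, rfl, rfl, -⟩ := List.map_eq_cons_iff.1 hc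
  obtain ⟨a, b, hl, hvF, rfl⟩ := List.exists_eq_append_cons_of_filter_eq hfilter
  exact ⟨a, F, b, hl, by simpa using hvF, rfl, rfl⟩

theorem mem_overlap_linkFacets_iff {prev : List (Finset V)} {v : V} {F σ : Finset V}
    (hvF : v ∈ F) (hvσ : v ∉ σ) :
    σ ∈ overlap (linkFacets prev v) (F.erase v) ↔ insert v σ ∈ overlap prev F := by
  simp only [overlap, Set.mem_ofPred_eq, subset_erase_iff_insert_subset hvσ hvF]
  refine and_congr_right fun _ => ⟨?_, ?_⟩
  · rintro ⟨G', hG', hσG'⟩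
    obtain ⟨-, hG'prev⟩ := mem_linkFacets.1 hG'
    exact ⟨_, hG'prev, insert_subset_insert v hσG'⟩
  · rintro ⟨G, hG, hσG⟩
    have hvG : v ∈ G := insert_subset_iff.1 hσG |>.1
    exact ⟨G.erase v, mem_linkFacets.2 ⟨notMem_erase v G, by rwa [insert_erase hvG]⟩,
      (subset_erase_iff_insert_subset hvσ hvG).2 hσG⟩

theorem IsShellingStep.link {prev : List (Finset V)} {F : Finset V} {v : V}
    (h : IsShellingStep prev F) (hvF : v ∈ F) (hprev : linkFacets prev v ≠ []) :
    IsShellingStep (linkFacets prev v) (F.erase v) := by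
  refine ⟨?_, fun σ hσ => ?_⟩
  · obtain ⟨G, hG⟩ := List.exists_mem_of_ne_nil _ hprev
    exact ⟨∅, empty_subset _, G, hG, empty_subset _⟩
  have hvσ : v ∉ σ := fun hv => notMem_erase v F (hσ.1.1 hv)
  have hmax : Maximal (· ∈ overlap prev F) (insert v σ) := by
    refine ⟨(mem_overlap_linkFacets_iff hvF hvσ).1 hσ.1, fun ρ hρ hσρ => ?_⟩
    have hvρ : v ∈ ρ := insert_subset_iff.1 hσρ |>.1
    have hρ' : ρ.erase v ∈ overlap (linkFacets prev v) (F.erase v) := by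
      rwa [mem_overlap_linkFacets_iff hvF (notMem_erase v ρ), insert_erase hvρ]
    exact subset_insert_iff.2 (hσ.2 hρ' ((subset_erase_iff_insert_subset hvσ hvρ).2 hσρ))
  have hcard := h.2 _ hmax
  rw [card_insert_of_notMem hvσ] at hcard
  rw [card_erase_of_mem hvF]
  omega

theorem IsShelling.link {K : Set (Finset V)} {l : List (Finset V)} (h : IsShelling K l)
    (v : V) : IsShelling (link K v) (linkFacets l v) := by
  rw [isShelling_iff] at h ⊢
  obtain ⟨hnd, hfacets, hsteps⟩ := h
  refine ⟨hnd.linkFacets v, fun σ => by rw [mem_linkFacets, hfacets, isFacet_link_iff], ?_⟩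
  intro a' σ b' hl' ha'
  obtain ⟨a, F, b, hl, hvF, rfl, rfl⟩ := exists_eq_append_cons_of_linkFacets_eq hl'
  exact (hsteps a F b hl (by rintro rfl; exact ha' rfl)).link hvF ha'

end Link

theorem link_shellable_of_shellable_general {V : Type*} [DecidableEq V]
    (L : Set (Finset V)) (v : V)
    (hshell : Shellable L) :
    Shellable {σ : Finset V | v ∉ σ ∧ σ ∪ {v} ∈ L} := by
  obtain ⟨l, hl⟩ := hshell
  exact ⟨linkFacets l v, hl.link v⟩

/-- If `L` is a shellable simplicial complex and `v` is a vertex of `L`, then the link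
`lk_L(v) = {σ : v ∉ σ ∧ σ ∪ {v} ∈ L}` is shellable. -/
theorem link_shellable_of_shellable {V : Type*} [DecidableEq V] [Fintype V]
    (L : Set (Finset V)) (hL : IsComplex L) (v : V) (hv : ({v} : Finset V) ∈ L)
    (hshell : Shellable L) :
    Shellable {σ : Finset V | v ∉ σ ∧ σ ∪ {v} ∈ L} :=
  link_shellable_of_shellable_general L v hshell
end

section
/- Let n ≥ 2, and let K be a simplicial complex on the vertex set [m] = {1,…,m} such that {i} ∈ K for every i ∈ [m]. Then the polyhedral product Z_K(Dⁿ, Sⁿ⁻¹) := ⋃_{σ ∈ K} {x ∈ (ℝⁿ)^m : ‖x_i‖ ≤ 1 for all i, and ‖x_i‖ = 1 for all i ∉ σ}, with the subspace topology of (ℝⁿ)^m, is simply connected. -/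
/-!
Fix a base point `x₀` on the torus `(Sⁿ⁻¹)ᵐ ⊆ Z_K`. A loop at `x₀` is first homotoped into the
torus: in each coordinate, every excursion into the open disk is replaced by a great-circle arc
(here `n ≥ 2` is used) joining the points where it leaves and re-enters the sphere. The straight
homotopy to the new loop never moves a coordinate lying on the sphere, so it stays in `Z_K`; the
new coordinate is continuous because an arc between points at distance `d` is
`(π / 2) d`-Lipschitz. A loop in the torus is then contracted one coordinate at a time through the
disk: meanwhile all other coordinates stay on the sphere, which is allowed since `{i} ∈ K`.
-/

open Finset

/-- The polyhedral product `Z_K(Dⁿ, Sⁿ⁻¹)`: the set of `m`-tuples of points of the closed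
unit ball of `ℝⁿ` such that, for some face `σ ∈ K`, every coordinate indexed outside `σ`
lies on the unit sphere. -/
def polyhedralProductDiskSphere (m n : ℕ) (K : Set (Finset (Fin m))) :
    Set (Fin m → EuclideanSpace ℝ (Fin n)) :=
  {x | ∃ σ ∈ K, (∀ i, ‖x i‖ ≤ 1) ∧ ∀ i ∉ σ, ‖x i‖ = 1}

open Real Metric Filter unitInterval
open scoped RealInnerProductSpace NNReal

theorem SimplyConnectedSpace.of_loops {X : Type*} [TopologicalSpace X] [PathConnectedSpace X]
    (x₀ : X) (h : ∀ γ : Path x₀ x₀, γ.Homotopic (Path.refl x₀)) : SimplyConnectedSpace X := by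
  refine simply_connected_iff_loops_nullhomotopic.mpr ⟨inferInstance, fun x γ => ?_⟩
  let r := PathConnectedSpace.somePath x₀ x
  have hconj := Path.Homotopic.Quotient.eq.mpr (h (r.trans (γ.trans r.symm)))
  rw [← Path.Homotopic.Quotient.eq]
  simp only [Path.Homotopic.Quotient.mk_trans, Path.Homotopic.Quotient.mk_symm,
    Path.Homotopic.Quotient.mk_refl] at hconj ⊢
  set ρ := Path.Homotopic.Quotient.mk r
  calc _ = ρ.symm.trans ((ρ.trans ((Path.Homotopic.Quotient.mk γ).trans ρ.symm)).trans ρ) := by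
        grind
    _ = _ := by simp [hconj]

theorem Path.Homotopic.of_forall_mem {V : Type*} [TopologicalSpace V] {Z : Set V} {x y : Z}
    {γ₀ γ₁ : Path x y} (H : I × I → V) (hH : Continuous H) (hZ : ∀ p, H p ∈ Z)
    (h₀ : ∀ s, H (0, s) = γ₀ s) (h₁ : ∀ s, H (1, s) = γ₁ s)
    (hx : ∀ t, H (t, 0) = x) (hy : ∀ t, H (t, 1) = y) : γ₀.Homotopic γ₁ :=
  ⟨{ toFun := fun p => ⟨H p, hZ p⟩
     continuous_toFun := hH.subtype_mk hZ
     map_zero_left := fun s => Subtype.ext (h₀ s)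
     map_one_left := fun s => Subtype.ext (h₁ s)
     prop' := by
       rintro t s (rfl | rfl)
       · exact Subtype.ext ((hx t).trans (by simp))
       · exact Subtype.ext ((hy t).trans (by simp)) }⟩

theorem Path.Homotopic.of_segment_subset {V : Type*} [AddCommGroup V] [Module ℝ V]
    [TopologicalSpace V] [IsTopologicalAddGroup V] [ContinuousSMul ℝ V] {Z : Set V} {x y : Z}
    {γ₀ γ₁ : Path x y} (h : ∀ s, segment ℝ (γ₀ s : V) (γ₁ s) ⊆ Z) : γ₀.Homotopic γ₁ :=
  of_forall_mem (fun p => AffineMap.lineMap (γ₀ p.2 : V) (γ₁ p.2) (p.1 : ℝ))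
    (by simp only [AffineMap.lineMap_apply_module]; fun_prop)
    (fun p => h p.2 (lineMap_mem_segment ℝ _ _ p.1.2))
    (by simp) (by simp) (by simp) (by simp)

section Gap

variable {F : Set ℝ} {a s t : ℝ}

noncomputable def gapLo (F : Set ℝ) (s : ℝ) : ℝ := sSup (F ∩ Set.Iic s)

noncomputable def gapHi (F : Set ℝ) (s : ℝ) : ℝ := sInf (F ∩ Set.Ici s)

theorem le_gapLo (ht : t ∈ F) (hts : t ≤ s) : t ≤ gapLo F s :=
  le_csSup ⟨s, fun _ h => h.2⟩ ⟨ht, hts⟩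

theorem gapHi_le (ht : t ∈ F) (hst : s ≤ t) : gapHi F s ≤ t :=
  csInf_le ⟨s, fun _ h => h.2⟩ ⟨ht, hst⟩

theorem gapLo_mem (hF : IsClosed F) (ha : a ∈ F) (has : a ≤ s) : gapLo F s ∈ F ∩ Set.Iic s :=
  (hF.inter isClosed_Iic).csSup_mem ⟨a, ha, has⟩ ⟨s, fun _ h => h.2⟩

theorem gapHi_mem (hF : IsClosed F) (ha : a ∈ F) (hsa : s ≤ a) : gapHi F s ∈ F ∩ Set.Ici s :=
  (hF.inter isClosed_Ici).csInf_mem ⟨a, ha, hsa⟩ ⟨s, fun _ h => h.2⟩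

theorem notMem_of_mem_Ioo_gap (ht : t ∈ Set.Ioo (gapLo F s) (gapHi F s)) : t ∉ F := fun htF =>
  (le_total t s).elim (fun h => (le_gapLo htF h).not_gt ht.1)
    (fun h => (gapHi_le htF h).not_gt ht.2)

theorem gapLo_eq_of_mem_Ioo (ht : t ∈ Set.Ioo (gapLo F s) (gapHi F s)) :
    gapLo F t = gapLo F s := by
  suffices F ∩ Set.Iic t = F ∩ Set.Iic s by rw [gapLo, this, gapLo]
  ext u
  simp only [Set.mem_inter_iff, Set.mem_Iic, and_congr_right_iff]
  refine fun hu =>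
    ⟨fun hut => le_of_not_gt fun hsu => ?_, fun hus => (le_gapLo hu hus).trans ht.1.le⟩
  exact (gapHi_le hu hsu.le).not_gt (hut.trans_lt ht.2)

theorem gapHi_eq_of_mem_Ioo (ht : t ∈ Set.Ioo (gapLo F s) (gapHi F s)) :
    gapHi F t = gapHi F s := by
  suffices F ∩ Set.Ici t = F ∩ Set.Ici s by rw [gapHi, this, gapHi]
  ext u
  simp only [Set.mem_inter_iff, Set.mem_Ici, and_congr_right_iff]
  refine fun hu =>
    ⟨fun htu => le_of_not_gt fun hus => ?_, fun hsu => ht.2.le.trans (gapHi_le hu hsu)⟩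
  exact (le_gapLo hu hus.le).not_gt (ht.1.trans_le htu)

theorem mem_Ioo_gap (hF : IsClosed F) (h0 : 0 ∈ F) (h1 : 1 ∈ F) (hs : s ∈ Set.Icc 0 1)
    (hsF : s ∉ F) : gapLo F s ∈ F ∧ gapHi F s ∈ F ∧ s ∈ Set.Ioo (gapLo F s) (gapHi F s) := by
  obtain ⟨hA, hAs⟩ := gapLo_mem hF h0 hs.1
  obtain ⟨hB, hsB⟩ := gapHi_mem hF h1 hs.2
  exact ⟨hA, hB, (Set.mem_Iic.mp hAs).lt_of_ne (ne_of_mem_of_not_mem hA hsF),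
    (Set.mem_Ici.mp hsB).lt_of_ne (ne_of_mem_of_not_mem hB hsF).symm⟩

theorem exists_gap_end_between (hF : IsClosed F) (h0 : 0 ∈ F) (h1 : 1 ∈ F)
    (hs : s ∈ Set.Icc 0 1) (hsF : s ∉ F) (ht : t ∈ F) :
    ∃ e, (e = gapLo F s ∨ e = gapHi F s) ∧ |s - e| ≤ gapHi F s - gapLo F s ∧
      |s - e| ≤ |s - t| ∧ |e - t| ≤ |s - t| := by
  obtain ⟨-, -, hAs, hsB⟩ := mem_Ioo_gap hF h0 h1 hs hsF
  rcases le_or_gt t (gapLo F s) with h | h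
  · refine ⟨gapLo F s, .inl rfl, ?_⟩
    rw [abs_of_pos (by linarith), abs_of_pos (by linarith), abs_of_nonneg (by linarith)]
    exact ⟨by linarith, by linarith, by linarith⟩
  · have h' : gapHi F s ≤ t := not_lt.mp fun h' => notMem_of_mem_Ioo_gap ⟨h, h'⟩ ht
    refine ⟨gapHi F s, .inr rfl, ?_⟩
    rw [abs_of_neg (by linarith), abs_of_neg (by linarith), abs_of_nonpos (by linarith)]
    exact ⟨by linarith, by linarith, by linarith⟩

end Gap

section GapFill

variable {X : Type*}

open Classical in
noncomputable def gapFill (F : Set ℝ) (c : ℝ → X) (g : X → X → ℝ → X) (s : ℝ) : X :=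
  if s ∈ F then c s else
    g (c (gapLo F s)) (c (gapHi F s)) ((s - gapLo F s) / (gapHi F s - gapLo F s))

variable {g : X → X → ℝ → X} {F : Set ℝ} {c : ℝ → X} {s : ℝ}

theorem gapFill_of_mem (hs : s ∈ F) : gapFill F c g s = c s := if_pos hs

variable [PseudoMetricSpace X] {S : Set X} {C : ℝ≥0}

def IsLipschitzConnector (S : Set X) (C : ℝ≥0) (g : X → X → ℝ → X) : Prop :=
  ∀ a ∈ S, ∀ b ∈ S, g a b 0 = a ∧ g a b 1 = b ∧ (∀ t, g a b t ∈ S) ∧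
    LipschitzWith (C * nndist a b) (g a b)

theorem gapFill_mem (hF : IsClosed F) (h0 : 0 ∈ F) (h1 : 1 ∈ F) (hcF : Set.MapsTo c F S)
    (hg : IsLipschitzConnector S C g) (hs : s ∈ Set.Icc 0 1) : gapFill F c g s ∈ S := by
  by_cases hsF : s ∈ F
  · rw [gapFill_of_mem hsF]
    exact hcF hsF
  · obtain ⟨hA, hB, -⟩ := mem_Ioo_gap hF h0 h1 hs hsF
    rw [gapFill, if_neg hsF]
    exact (hg _ (hcF hA) _ (hcF hB)).2.2.1 _

theorem continuousAt_gapFill_of_notMem (hF : IsClosed F) (h0 : 0 ∈ F) (h1 : 1 ∈ F)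
    (hcF : Set.MapsTo c F S) (hg : IsLipschitzConnector S C g) (hs : s ∈ Set.Icc 0 1)
    (hsF : s ∉ F) : ContinuousAt (gapFill F c g) s := by
  obtain ⟨hA, hB, hsAB⟩ := mem_Ioo_gap hF h0 h1 hs hsF
  set A := gapLo F s
  set B := gapHi F s
  have hcont : ContinuousAt (fun t => g (c A) (c B) ((t - A) / (B - A))) s :=
    (hg _ (hcF hA) _ (hcF hB)).2.2.2.continuous.continuousAt.comp (by fun_prop)
  refine hcont.congr (eventuallyEq_of_mem (isOpen_Ioo.mem_nhds hsAB) fun t ht => ?_)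
  rw [gapFill, if_neg (notMem_of_mem_Ioo_gap ht), gapLo_eq_of_mem_Ioo ht, gapHi_eq_of_mem_Ioo ht]

theorem dist_gapFill_le (hF : IsClosed F) (h0 : 0 ∈ F) (h1 : 1 ∈ F) (hcF : Set.MapsTo c F S)
    (hg : IsLipschitzConnector S C g) (hs : s ∈ Set.Icc 0 1) (hsF : s ∉ F) {e : ℝ}
    (he : e = gapLo F s ∨ e = gapHi F s) :
    dist (gapFill F c g s) (c e) ≤
      C * dist (c (gapLo F s)) (c (gapHi F s)) * (|s - e| / (gapHi F s - gapLo F s)) := by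
  obtain ⟨hA, hB, hAs, hsB⟩ := mem_Ioo_gap hF h0 h1 hs hsF
  obtain ⟨hg0, hg1, -, hlip⟩ := hg _ (hcF hA) _ (hcF hB)
  have hAB : 0 < gapHi F s - gapLo F s := by linarith
  rw [gapFill, if_neg hsF]
  rcases he with rfl | rfl
  · convert hlip.dist_le_mul _ 0 using 1
    · rw [hg0]
    · rw [Real.dist_eq, sub_zero, abs_div, abs_of_pos hAB]
      push_cast
      ring
  · convert hlip.dist_le_mul _ 1 using 1
    · rw [hg1]
    · rw [Real.dist_eq, div_sub_one hAB.ne', abs_div, abs_of_pos hAB,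
        show s - gapLo F s - (gapHi F s - gapLo F s) = s - gapHi F s by ring]
      push_cast
      ring

theorem dist_gapFill_le_of_mem (hF : IsClosed F) (h0 : 0 ∈ F) (h1 : 1 ∈ F)
    (hcF : Set.MapsTo c F S) (hg : IsLipschitzConnector S C g) (hSb : Bornology.IsBounded S)
    {s₀ η ε : ℝ} (hs₀ : s₀ ∈ F) (hc : ∀ t, |t - s₀| < η → dist (c t) (c s₀) ≤ ε)
    (hs : s ∈ Set.Icc 0 1) (hss₀ : |s - s₀| < η / 2) :
    dist (gapFill F c g s) (c s₀) ≤ (2 * C + 1) * ε + 2 * C * (diam S * |s - s₀| / η) := by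
  have hη : 0 < η := by linarith [abs_nonneg (s - s₀)]
  have hε : 0 ≤ ε := dist_nonneg.trans (hc s₀ (by simpa using hη))
  have hD : 0 ≤ diam S * |s - s₀| / η := by have := diam_nonneg (s := S); positivity
  by_cases hsF : s ∈ F
  · rw [gapFill_of_mem hsF]
    linarith [hc s (by linarith), mul_nonneg C.coe_nonneg hε, mul_nonneg C.coe_nonneg hD]
  obtain ⟨hA, hB, hAs, hsB⟩ := mem_Ioo_gap hF h0 h1 hs hsF
  obtain ⟨e, he, hseAB, hse, hes₀⟩ := exists_gap_end_between hF h0 h1 hs hsF hs₀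
  set A := gapLo F s
  set B := gapHi F s
  -- short gaps have both ends close to `s₀`; long ones are crossed slowly near their ends
  have hdr : dist (c A) (c B) * (|s - e| / (B - A)) ≤ 2 * ε + 2 * (diam S * |s - s₀| / η) := by
    have hr0 : 0 ≤ |s - e| / (B - A) := div_nonneg (abs_nonneg _) (by linarith)
    rcases lt_or_ge (B - A) (η / 2) with hnear | hfar
    · have hd : dist (c A) (c B) ≤ 2 * ε := by
        linarith [dist_triangle_right (c A) (c B) (c s₀),
          hc A (by rw [abs_sub_lt_iff]; grind), hc B (by rw [abs_sub_lt_iff]; grind)]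
      have hr : |s - e| / (B - A) ≤ 1 := div_le_one_of_le₀ hseAB (by linarith)
      nlinarith [dist_nonneg (x := c A) (y := c B)]
    · have hr : |s - e| / (B - A) ≤ |s - s₀| / (η / 2) :=
        div_le_div₀ (abs_nonneg _) hse (by positivity) hfar
      calc dist (c A) (c B) * (|s - e| / (B - A)) ≤ diam S * (|s - s₀| / (η / 2)) :=
            mul_le_mul (dist_le_diam_of_mem hSb (hcF hA) (hcF hB)) hr hr0 diam_nonneg
        _ = 2 * (diam S * |s - s₀| / η) := by ring
        _ ≤ 2 * ε + 2 * (diam S * |s - s₀| / η) := by linarith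
  calc dist (gapFill F c g s) (c s₀) ≤ dist (gapFill F c g s) (c e) + dist (c e) (c s₀) :=
        dist_triangle _ _ _
    _ ≤ C * (2 * ε + 2 * (diam S * |s - s₀| / η)) + ε := by
        refine add_le_add ?_ (hc e (by linarith))
        refine (dist_gapFill_le hF h0 h1 hcF hg hs hsF he).trans ?_
        rw [mul_assoc]
        gcongr
    _ = _ := by ring

theorem continuousWithinAt_gapFill_of_mem (hF : IsClosed F) (h0 : 0 ∈ F) (h1 : 1 ∈ F)
    (hcF : Set.MapsTo c F S) (hg : IsLipschitzConnector S C g) (hSb : Bornology.IsBounded S)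
    {s₀ : ℝ} (hc : ContinuousAt c s₀) (hs₀ : s₀ ∈ F) :
    ContinuousWithinAt (gapFill F c g) (Set.Icc 0 1) s₀ := by
  rw [Metric.continuousWithinAt_iff, gapFill_of_mem hs₀]
  intro ε hε
  set ε' := ε / (2 * (2 * C + 1))
  obtain ⟨η, hη, hcη⟩ := Metric.continuousAt_iff.mp hc ε' (by positivity)
  have hCD : 0 ≤ C * diam S := mul_nonneg C.coe_nonneg diam_nonneg
  refine ⟨min (η / 2) (ε * η / (4 * (C * diam S + 1))), by positivity, fun {s} hs hss₀ => ?_⟩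
  rw [Real.dist_eq, lt_min_iff] at hss₀
  refine (dist_gapFill_le_of_mem hF h0 h1 hcF hg hSb hs₀ (fun t ht => (hcη ht).le) hs
    hss₀.1).trans_lt ?_
  have hε' : (2 * C + 1) * ε' = ε / 2 := by simp only [ε']; field_simp
  have : 2 * C * (diam S * |s - s₀| / η) < ε / 2 := by
    rw [← mul_div_assoc, div_lt_iff₀ hη]
    calc 2 * C * (diam S * |s - s₀|) = 2 * (C * diam S) * |s - s₀| := by ring
      _ ≤ 2 * (C * diam S) * (ε * η / (4 * (C * diam S + 1))) := by
          gcongr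
          exact hss₀.2.le
      _ < ε / 2 * η := by
          rw [← sub_pos]
          field_simp
          nlinarith [mul_pos hε hη]
  linarith

theorem continuousOn_gapFill (hF : IsClosed F) (h0 : 0 ∈ F) (h1 : 1 ∈ F) (hcF : Set.MapsTo c F S)
    (hg : IsLipschitzConnector S C g) (hSb : Bornology.IsBounded S) (hc : Continuous c) :
    ContinuousOn (gapFill F c g) (Set.Icc 0 1) := by
  intro s hs
  by_cases hsF : s ∈ F
  · exact continuousWithinAt_gapFill_of_mem hF h0 h1 hcF hg hSb hc.continuousAt hsF
  · exact (continuousAt_gapFill_of_notMem hF h0 h1 hcF hg hs hsF).continuousWithinAt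

theorem Path.exists_forall_mem_eq_of_isLipschitzConnector (hS : IsClosed S)
    (hSb : Bornology.IsBounded S) (hg : IsLipschitzConnector S C g) {a b : X} (γ : Path a b)
    (ha : a ∈ S) (hb : b ∈ S) : ∃ γ' : Path a b, (∀ t, γ' t ∈ S) ∧ ∀ t, γ t ∈ S → γ' t = γ t := by
  set F := Set.Icc 0 1 ∩ γ.extend ⁻¹' S
  have hF : IsClosed F := isClosed_Icc.inter (hS.preimage γ.continuous_extend)
  have h0 : (0 : ℝ) ∈ F := ⟨Set.left_mem_Icc.2 zero_le_one, by simpa using ha⟩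
  have h1 : (1 : ℝ) ∈ F := ⟨Set.right_mem_Icc.2 zero_le_one, by simpa using hb⟩
  have hcF : Set.MapsTo γ.extend F S := fun s hs => hs.2
  have hfill := continuousOn_gapFill hF h0 h1 hcF hg hSb γ.continuous_extend
  refine ⟨⟨⟨fun t => gapFill F γ.extend g t,
    hfill.comp_continuous continuous_subtype_val fun t => t.2⟩, ?_, ?_⟩,
    fun t => gapFill_mem hF h0 h1 hcF hg t.2, fun t ht => ?_⟩
  · simp [gapFill_of_mem h0]
  · simp [gapFill_of_mem h1]
  · have htF : (t : ℝ) ∈ F := ⟨t.2, by simpa using ht⟩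
    simp [gapFill_of_mem htF]

end GapFill

section Sphere

variable {E : Type*} [NormedAddCommGroup E] [InnerProductSpace ℝ E]

theorem exists_norm_smul_eq_of_inner_eq_zero (h : 1 < Module.rank ℝ E) {a d : E}
    (hd : ⟪a, d⟫ = 0) : ∃ w : E, ‖w‖ = 1 ∧ ⟪a, w⟫ = 0 ∧ ‖d‖ • w = d := by
  rcases eq_or_ne d 0 with rfl | hd0
  · have hperp : (ℝ ∙ a)ᗮ ≠ ⊥ := by
      rw [Ne, Submodule.orthogonal_eq_bot_iff]
      intro htop
      have := rank_span_le (R := ℝ) ({a} : Set E)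
      rw [htop, rank_top, Cardinal.mk_singleton] at this
      exact this.not_gt h
    obtain ⟨v, hv, hv0⟩ := Submodule.exists_mem_ne_zero_of_ne_bot hperp
    refine ⟨‖v‖⁻¹ • v, by simpa using norm_smul_inv_norm (𝕜 := ℝ) hv0, ?_, by simp⟩
    rw [inner_smul_right, Submodule.mem_orthogonal_singleton_iff_inner_right.mp hv, mul_zero]
  · refine ⟨‖d‖⁻¹ • d, by simpa using norm_smul_inv_norm (𝕜 := ℝ) hd0, ?_, ?_⟩
    · rw [inner_smul_right, hd, mul_zero]
    · rw [smul_smul, mul_inv_cancel₀ (norm_ne_zero_iff.mpr hd0), one_smul]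

theorem norm_smul_add_smul_sq {a w : E} (ha : ‖a‖ = 1) (hw : ‖w‖ = 1) (haw : ⟪a, w⟫ = 0)
    (α β : ℝ) : ‖α • a + β • w‖ ^ 2 = α ^ 2 + β ^ 2 := by
  rw [norm_add_sq_real, norm_smul, norm_smul, real_inner_smul_left, real_inner_smul_right, haw,
    ha, hw]
  simp

noncomputable def greatCircle (a w : E) (t : ℝ) : E := cos t • a + sin t • w

variable {a w : E}

theorem norm_greatCircle (ha : ‖a‖ = 1) (hw : ‖w‖ = 1) (haw : ⟪a, w⟫ = 0) (t : ℝ) :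
    ‖greatCircle a w t‖ = 1 := by
  have := norm_smul_add_smul_sq ha hw haw (cos t) (sin t)
  rw [cos_sq_add_sin_sq] at this
  exact (pow_eq_one_iff_of_nonneg (norm_nonneg _) two_ne_zero).mp this

theorem norm_greatCircle_sub_sq (ha : ‖a‖ = 1) (hw : ‖w‖ = 1) (haw : ⟪a, w⟫ = 0) (s t : ℝ) :
    ‖greatCircle a w s - greatCircle a w t‖ ^ 2 = 2 - 2 * cos (s - t) := by
  have : greatCircle a w s - greatCircle a w t = (cos s - cos t) • a + (sin s - sin t) • w := by
    simp only [greatCircle]; module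
  rw [this, norm_smul_add_smul_sq ha hw haw, cos_sub]
  nlinarith [sin_sq_add_cos_sq s, sin_sq_add_cos_sq t]

theorem dist_greatCircle_le (ha : ‖a‖ = 1) (hw : ‖w‖ = 1) (haw : ⟪a, w⟫ = 0) (s t : ℝ) :
    dist (greatCircle a w s) (greatCircle a w t) ≤ dist s t := by
  rw [dist_eq_norm, Real.dist_eq, ← sq_le_sq₀ (norm_nonneg _) (abs_nonneg _),
    norm_greatCircle_sub_sq ha hw haw, sq_abs]
  linarith [one_sub_sq_div_two_le_cos (x := s - t)]

theorem exists_greatCircle_eq (h : 1 < Module.rank ℝ E) {b : E} (ha : ‖a‖ = 1) (hb : ‖b‖ = 1) :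
    ∃ w : E, ‖w‖ = 1 ∧ ⟪a, w⟫ = 0 ∧ ∃ θ ∈ Set.Icc 0 π, greatCircle a w θ = b := by
  set x := ⟪a, b⟫
  have hx : |x| ≤ 1 := by simpa [ha, hb] using abs_real_inner_le_norm a b
  have had : ⟪a, b - x • a⟫ = 0 := by
    rw [inner_sub_right, real_inner_smul_right, real_inner_self_eq_norm_sq, ha]; ring
  obtain ⟨w, hw, haw, hdw⟩ := exists_norm_smul_eq_of_inner_eq_zero h had
  have hd : ‖b - x • a‖ = sin (arccos x) := by
    rw [sin_arccos, ← sqrt_sq (norm_nonneg _), ← sq_abs x]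
    congr 1
    rw [norm_sub_sq_real, real_inner_smul_right, norm_smul, hb, ha, real_inner_comm]
    simp only [one_pow, norm_eq_abs, mul_one, sq_abs]
    ring
  refine ⟨w, hw, haw, arccos x, ⟨arccos_nonneg x, arccos_le_pi x⟩, ?_⟩
  rw [greatCircle, cos_arccos (abs_le.mp hx).1 (abs_le.mp hx).2, ← hd, hdw]
  abel

theorem exists_lipschitzWith_sphere_path (h : 1 < Module.rank ℝ E) {a b : E} (ha : ‖a‖ = 1)
    (hb : ‖b‖ = 1) : ∃ p : ℝ → E, p 0 = a ∧ p 1 = b ∧ (∀ t, ‖p t‖ = 1) ∧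
      LipschitzWith (NNReal.pi / 2 * nndist a b) p := by
  obtain ⟨w, hw, haw, θ, ⟨hθ0, hθπ⟩, hθ⟩ := exists_greatCircle_eq h ha hb
  have hθab : θ ≤ π / 2 * dist a b := by
    have hdist := norm_greatCircle_sub_sq ha hw haw 0 θ
    rw [hθ, show greatCircle a w 0 = a by simp [greatCircle], ← dist_eq_norm, zero_sub,
      cos_neg] at hdist
    have hcos := cos_le_one_sub_mul_cos_sq (x := θ) (by rwa [abs_of_nonneg hθ0])
    have h2θ : 2 / π * θ ≤ dist a b := by
      refine (pow_le_pow_iff_left₀ (by positivity) dist_nonneg two_ne_zero).mp ?_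
      rw [hdist, show (2 / π * θ) ^ 2 = 2 * (2 / π ^ 2 * θ ^ 2) by ring]
      linarith
    calc θ = π / 2 * (2 / π * θ) := by field_simp
      _ ≤ π / 2 * dist a b := by gcongr
  refine ⟨fun t => greatCircle a w (θ * t), by simp [greatCircle], by simpa using hθ,
    fun t => norm_greatCircle ha hw haw _, LipschitzWith.of_dist_le_mul fun u v => ?_⟩
  calc dist (greatCircle a w (θ * u)) (greatCircle a w (θ * v)) ≤ dist (θ * u) (θ * v) :=
        dist_greatCircle_le ha hw haw _ _
    _ = θ * dist u v := by rw [Real.dist_eq, Real.dist_eq, ← mul_sub, abs_mul, abs_of_nonneg hθ0]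
    _ ≤ _ := by
        simp only [NNReal.coe_mul, NNReal.coe_div, NNReal.coe_ofNat, NNReal.coe_real_pi,
          coe_nndist]
        gcongr

theorem exists_isLipschitzConnector_sphere (h : 1 < Module.rank ℝ E) :
    ∃ g : E → E → ℝ → E, IsLipschitzConnector (sphere (0 : E) 1) (NNReal.pi / 2) g := by
  choose! g hg using fun (a : E) (ha : a ∈ sphere (0 : E) 1) (b : E) (hb : b ∈ sphere (0 : E) 1) =>
    exists_lipschitzWith_sphere_path h (mem_sphere_zero_iff_norm.mp ha)
      (mem_sphere_zero_iff_norm.mp hb)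
  refine ⟨g, fun a ha b hb => ?_⟩
  obtain ⟨h0, h1, hS, hL⟩ := hg a ha b hb
  exact ⟨h0, h1, fun t => mem_sphere_zero_iff_norm.mpr (hS t), hL⟩

end Sphere

theorem one_lt_rank_euclideanSpace {n : ℕ} (hn : 2 ≤ n) :
    1 < Module.rank ℝ (EuclideanSpace ℝ (Fin n)) := by
  rw [← Module.finrank_eq_rank, finrank_euclideanSpace_fin]
  exact_mod_cast hn

section Stagger

noncomputable def stagger (m i : ℕ) (t : ℝ) : ℝ := max 0 (min 1 (m * t - i))

theorem stagger_mem_Icc (m i : ℕ) (t : ℝ) : stagger m i t ∈ Set.Icc 0 1 :=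
  ⟨le_max_left _ _, max_le zero_le_one (min_le_left _ _)⟩

theorem continuous_stagger (m i : ℕ) : Continuous (stagger m i) :=
  continuous_const.max (continuous_const.min (by fun_prop))

theorem stagger_zero (m i : ℕ) : stagger m i 0 = 0 := by
  simp [stagger]

theorem stagger_one {m i : ℕ} (hi : i < m) : stagger m i 1 = 1 := by
  have : (i : ℝ) + 1 ≤ m := by exact_mod_cast hi
  rw [stagger, mul_one, min_eq_left (by linarith), max_eq_right zero_le_one]

theorem subsingleton_setOf_stagger_mem_Ioo (m : ℕ) (t : ℝ) :
    {i | stagger m i t ∈ Set.Ioo 0 1}.Subsingleton := by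
  have key : ∀ i, stagger m i t ∈ Set.Ioo 0 1 → (i : ℝ) < m * t ∧ m * t < i + 1 := by
    intro i ⟨h0, h1⟩
    simp only [stagger, lt_max_iff, lt_min_iff, max_lt_iff, min_lt_iff, lt_irrefl, false_or,
      zero_lt_one, true_and] at h0 h1
    constructor <;> linarith
  intro i hi j hj
  obtain ⟨hi₁, hi₂⟩ := key i hi
  obtain ⟨hj₁, hj₂⟩ := key j hj
  have : i < j + 1 := by exact_mod_cast hi₁.trans hj₂
  have : j < i + 1 := by exact_mod_cast hj₁.trans hi₂
  omega

end Stagger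

section PolyhedralProduct

variable {m n : ℕ} {K : Set (Finset (Fin m))} {x y : Fin m → EuclideanSpace ℝ (Fin n)}

theorem mem_polyhedralProductDiskSphere_of_forall_norm_eq_one (hK : ∅ ∈ K)
    (hx : ∀ i, ‖x i‖ = 1) : x ∈ polyhedralProductDiskSphere m n K :=
  ⟨∅, hK, fun i => (hx i).le, fun i _ => hx i⟩

theorem mem_polyhedralProductDiskSphere_of_subsingleton (hK : ∅ ∈ K)
    (hvert : ∀ i : Fin m, ({i} : Finset (Fin m)) ∈ K) (hx : ∀ i, ‖x i‖ ≤ 1)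
    (h : {i | ‖x i‖ ≠ 1}.Subsingleton) : x ∈ polyhedralProductDiskSphere m n K := by
  rcases h.eq_empty_or_singleton with h | ⟨k, hk⟩
  · exact mem_polyhedralProductDiskSphere_of_forall_norm_eq_one hK fun i =>
      not_not.mp fun hi => (h.subset hi : i ∈ (∅ : Set (Fin m)))
  · refine ⟨{k}, hvert k, hx, fun i hi => not_not.mp fun hxi => hi ?_⟩
    exact Finset.mem_singleton.mpr (hk.subset hxi)

theorem mem_polyhedralProductDiskSphere_of_norm_eq_one_imp
    (hx : x ∈ polyhedralProductDiskSphere m n K) (hy : ∀ i, ‖y i‖ ≤ 1)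
    (hxy : ∀ i, ‖x i‖ = 1 → ‖y i‖ = 1) : y ∈ polyhedralProductDiskSphere m n K := by
  obtain ⟨τ, hτ, -, hτx⟩ := hx
  exact ⟨τ, hτ, hy, fun i hi => hxy i (hτx i hi)⟩

theorem segment_subset_polyhedralProductDiskSphere (hx : x ∈ polyhedralProductDiskSphere m n K)
    (hy : ∀ i, ‖y i‖ ≤ 1) (hxy : ∀ i, ‖x i‖ = 1 → y i = x i) :
    segment ℝ x y ⊆ polyhedralProductDiskSphere m n K := by
  have ⟨_, _, hx1, _⟩ := hx
  rintro z ⟨α, β, hα, hβ, hαβ, rfl⟩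
  refine mem_polyhedralProductDiskSphere_of_norm_eq_one_imp hx (fun i => ?_) fun i hi => ?_
  · simpa using (convex_closedBall (0 : EuclideanSpace ℝ (Fin n)) 1)
      (mem_closedBall_zero_iff.mpr (hx1 i)) (mem_closedBall_zero_iff.mpr (hy i)) hα hβ hαβ
  · simp [hxy i hi, ← add_smul, hαβ, hi]

theorem isPathConnected_polyhedralProductDiskSphere (hn : 2 ≤ n) (hK : ∅ ∈ K) :
    IsPathConnected (polyhedralProductDiskSphere m n K) := by
  set T := Set.univ.pi fun _ : Fin m => sphere (0 : EuclideanSpace ℝ (Fin n)) 1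
  have hTZ : T ⊆ polyhedralProductDiskSphere m n K := fun x hx =>
    mem_polyhedralProductDiskSphere_of_forall_norm_eq_one hK fun i => by
      simpa using hx i (Set.mem_univ i)
  obtain ⟨x₀, hx₀, hjoin⟩ :=
    IsPathConnected.pi fun _ => isPathConnected_sphere (one_lt_rank_euclideanSpace hn) 0 zero_le_one
  refine ⟨x₀, hTZ hx₀, fun y hy => ?_⟩
  set y' : Fin m → EuclideanSpace ℝ (Fin n) := fun i => if ‖y i‖ = 1 then y i else x₀ i
  have hy' : ∀ i, ‖y' i‖ = 1 := fun i => by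
    by_cases h : ‖y i‖ = 1
    · simp [y', h]
    · simpa [y', h] using hx₀ i (Set.mem_univ i)
  have hyy' := segment_subset_polyhedralProductDiskSphere hy (fun i => (hy' i).le) fun i hi =>
    if_pos hi
  exact ((hjoin fun i _ => by simpa using hy' i).mono hTZ).trans
    (JoinedIn.of_segment_subset hyy').symm

theorem Path.exists_homotopic_forall_norm_eq_one (hn : 2 ≤ n)
    {x y : polyhedralProductDiskSphere m n K}
    (hx : ∀ i, ‖(x : Fin m → EuclideanSpace ℝ (Fin n)) i‖ = 1)
    (hy : ∀ i, ‖(y : Fin m → EuclideanSpace ℝ (Fin n)) i‖ = 1) (γ : Path x y) :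
    ∃ γ' : Path x y, γ.Homotopic γ' ∧
      ∀ s i, ‖(γ' s : Fin m → EuclideanSpace ℝ (Fin n)) i‖ = 1 := by
  obtain ⟨g, hg⟩ := exists_isLipschitzConnector_sphere (one_lt_rank_euclideanSpace hn)
  choose γ' hγ'S hγ'eq using fun i =>
    Path.exists_forall_mem_eq_of_isLipschitzConnector isClosed_sphere isBounded_sphere hg
      (γ.map ((continuous_apply i).comp continuous_subtype_val))
      (mem_sphere_zero_iff_norm.mpr (hx i)) (mem_sphere_zero_iff_norm.mpr (hy i))
  have hγ'1 : ∀ s i, ‖γ' i s‖ = 1 := fun s i => mem_sphere_zero_iff_norm.mp (hγ'S i s)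
  have hmem : ∀ s, (fun i => γ' i s) ∈ polyhedralProductDiskSphere m n K := fun s =>
    mem_polyhedralProductDiskSphere_of_norm_eq_one_imp (γ s).2 (fun i => (hγ'1 s i).le)
      fun i _ => hγ'1 s i
  refine ⟨{ toFun := fun s => ⟨fun i => γ' i s, hmem s⟩
            continuous_toFun := (continuous_pi fun i => (γ' i).continuous).subtype_mk hmem
            source' := Subtype.ext (funext fun i => (γ' i).source)
            target' := Subtype.ext (funext fun i => (γ' i).target) },
    Path.Homotopic.of_segment_subset fun s => ?_, fun s i => hγ'1 s i⟩
  refine segment_subset_polyhedralProductDiskSphere (γ s).2 (fun i => (hγ'1 s i).le) fun i hi => ?_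
  exact hγ'eq i s (mem_sphere_zero_iff_norm.mpr hi)

theorem Path.homotopic_refl_of_forall_norm_eq_one (hK : ∅ ∈ K)
    (hvert : ∀ i : Fin m, ({i} : Finset (Fin m)) ∈ K) {x₀ : polyhedralProductDiskSphere m n K}
    (γ : Path x₀ x₀) (hγ : ∀ s i, ‖(γ s : Fin m → EuclideanSpace ℝ (Fin n)) i‖ = 1) :
    γ.Homotopic (Path.refl x₀) := by
  -- coordinate `i` moves during `[i / m, (i + 1) / m]`, so at most one is off the sphere at a time
  have hx₀ : ∀ i, ‖(x₀ : Fin m → EuclideanSpace ℝ (Fin n)) i‖ = 1 := by simpa using hγ 0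
  set H : I × I → Fin m → EuclideanSpace ℝ (Fin n) := fun p i =>
    AffineMap.lineMap ((γ p.2 : Fin m → EuclideanSpace ℝ (Fin n)) i) (x₀.1 i) (stagger m i p.1)
  have hH : ∀ p i, ‖H p i‖ ≠ 1 → stagger m i p.1 ∈ Set.Ioo 0 1 := fun p i hi =>
    ⟨(stagger_mem_Icc m i p.1).1.lt_of_ne fun h => hi (by simp [H, ← h, hγ]),
      (stagger_mem_Icc m i p.1).2.lt_of_ne fun h => hi (by simp [H, h, hx₀])⟩
  refine Path.Homotopic.of_forall_mem H ?_ (fun p => ?_) (fun s => ?_) (fun s => ?_)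
    (fun t => by simp [H]) (fun t => by simp [H])
  · refine continuous_pi fun i => ?_
    have hγi : Continuous fun p : I × I => (γ p.2 : Fin m → EuclideanSpace ℝ (Fin n)) i :=
      (continuous_apply i).comp (continuous_subtype_val.comp (γ.continuous.comp continuous_snd))
    have hν : Continuous fun p : I × I => stagger m i p.1 :=
      (continuous_stagger m i).comp (continuous_subtype_val.comp continuous_fst)
    simp only [H, AffineMap.lineMap_apply_module]
    exact ((continuous_const.sub hν).smul hγi).add (hν.smul continuous_const)
  · refine mem_polyhedralProductDiskSphere_of_subsingleton hK hvert (fun i => ?_)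
      (((subsingleton_setOf_stagger_mem_Ioo m p.1).preimage Fin.val_injective).anti
        fun i hi => hH p i hi)
    exact mem_closedBall_zero_iff.mp ((convex_closedBall 0 1).lineMap_mem
      (mem_closedBall_zero_iff.mpr (hγ _ _).le) (mem_closedBall_zero_iff.mpr (hx₀ i).le)
      (stagger_mem_Icc _ _ _))
  · funext i
    simp [H, stagger_zero]
  · funext i
    simp [H, stagger_one i.isLt]

end PolyhedralProduct

/-- For `n ≥ 2` and a simplicial complex `K` on `[m]` containing all singletons, the
polyhedral product `Z_K(Dⁿ, Sⁿ⁻¹)` is simply connected. -/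
theorem polyhedralProductDiskSphere_simplyConnected {m n : ℕ} (hn : 2 ≤ n)
    (K : Set (Finset (Fin m))) (hK : IsComplex K)
    (hvert : ∀ i : Fin m, ({i} : Finset (Fin m)) ∈ K) :
    SimplyConnectedSpace ↥(polyhedralProductDiskSphere m n K) := by
  obtain ⟨e, he⟩ :=
    (isPathConnected_sphere (one_lt_rank_euclideanSpace hn) (0 : EuclideanSpace ℝ (Fin n))
      zero_le_one).nonempty
  rw [mem_sphere_zero_iff_norm] at he
  let x₀ : polyhedralProductDiskSphere m n K :=
    ⟨fun _ => e, mem_polyhedralProductDiskSphere_of_forall_norm_eq_one hK.1 fun _ => he⟩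
  have := isPathConnected_iff_pathConnectedSpace.mp
    (isPathConnected_polyhedralProductDiskSphere (m := m) (K := K) hn hK.1)
  refine SimplyConnectedSpace.of_loops x₀ fun γ => ?_
  have hx₀ : ∀ i, ‖(x₀ : Fin m → EuclideanSpace ℝ (Fin n)) i‖ = 1 := fun _ => he
  obtain ⟨γ', hγγ', hγ'⟩ := γ.exists_homotopic_forall_norm_eq_one hn hx₀ hx₀
  exact hγγ'.trans (γ'.homotopic_refl_of_forall_norm_eq_one hK.1 hvert hγ')
end

section
/- Let K be a simplicial complex on the vertex set [m] = {1,…,m}, and let σ ⊆ τ ⊆ [m] be such that σ^∨ := [m]∖σ and τ^∨ := [m]∖τ are both faces of the Alexander dual K^∨, and σ^∨ is the unique face of K^∨ properly containing τ^∨. Then: (i) K ∪ {σ, τ} is a simplicial complex (closed under taking subsets); (ii) τ is the unique face of K ∪ {σ, τ} properly containing σ, and |τ| = |σ| + 1; and (iii) (K ∪ {σ, τ})^∨ = K^∨ ∖ {σ^∨, τ^∨}, the elementary collapse of K^∨ at the free face τ^∨. -/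
open Finset

/-! The hypothesis on `K^∨` says, after complementing, that `σ` is the only non-face of `K`
properly contained in `τ`. So every proper subset of `τ` other than `σ` lies in `K`, which makes
`K ∪ {σ, τ}` downward closed, and nothing lies strictly between `σ` and `τ`, which forces
`|τ| = |σ| + 1`. -/

section IsComplex

variable {V : Type*} {K : Set (Finset V)} {σ τ : Finset V}

theorem mem_union_pair_of_subset (hgap : ∀ ρ ∉ K, ρ ⊂ τ → ρ = σ) {ρ : Finset V}
    (hρ : ρ ⊆ τ) : ρ ∈ K ∪ {σ, τ} := by
  by_cases hρK : ρ ∈ K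
  · exact Or.inl hρK
  obtain rfl | hρτ := eq_or_ssubset_of_subset hρ
  · exact Or.inr (Or.inr rfl)
  · exact Or.inr (Or.inl (hgap ρ hρK hρτ))

theorem IsComplex.union_pair (hK : IsComplex K) (hστ : σ ⊆ τ)
    (hgap : ∀ ρ ∉ K, ρ ⊂ τ → ρ = σ) : IsComplex (K ∪ {σ, τ}) := by
  refine ⟨Or.inl hK.1, ?_⟩
  rintro ρ (hρ | rfl | rfl) ρ' hρ'
  · exact Or.inl (hK.2 ρ hρ ρ' hρ')
  · exact mem_union_pair_of_subset hgap (hρ'.trans hστ)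
  · exact mem_union_pair_of_subset hgap hρ'

theorem IsComplex.eq_of_ssubset_of_mem_union_pair (hK : IsComplex K) (hσ : σ ∉ K)
    {ρ : Finset V} (hρ : ρ ∈ K ∪ {σ, τ}) (hσρ : σ ⊂ ρ) : ρ = τ := by
  rcases hρ with hρK | rfl | rfl
  · exact absurd (hK.2 ρ hρK σ hσρ.subset) hσ
  · exact absurd rfl hσρ.ne
  · rfl

theorem IsComplex.covBy_of_forall_notMem (hK : IsComplex K) (hσ : σ ∉ K) (hστ : σ ⊂ τ)
    (hgap : ∀ ρ ∉ K, ρ ⊂ τ → ρ = σ) : σ ⋖ τ := by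
  refine ⟨hστ, fun ρ hσρ hρτ => ?_⟩
  have hρK : ρ ∉ K := fun hρK => hσ (hK.2 ρ hρK σ hσρ.subset)
  exact hσρ.ne' (hgap ρ hρK hρτ)

end IsComplex

section alexDual

variable {m : ℕ} {K : Set (Finset (Fin m))} {σ τ : Finset (Fin m)}

theorem mem_alexDual : σ ∈ alexDual K ↔ σᶜ ∉ K := by
  rw [compl_eq_univ_sdiff]
  rfl

theorem compl_mem_alexDual : σᶜ ∈ alexDual K ↔ σ ∉ K := by
  rw [mem_alexDual, compl_compl]

theorem alexDual_union_pair (K : Set (Finset (Fin m))) (σ τ : Finset (Fin m)) :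
    alexDual (K ∪ {σ, τ}) = alexDual K \ {σᶜ, τᶜ} := by
  ext ρ
  simp only [mem_alexDual, Set.mem_sdiff, Set.mem_union, Set.mem_insert_iff,
    Set.mem_singleton_iff, not_or, compl_eq_comm, eq_comm (a := ρ)]

theorem eq_of_notMem_of_ssubset_of_alexDual (huniq : ∀ ρ ∈ alexDual K, τᶜ ⊂ ρ → ρ = σᶜ)
    {ρ : Finset (Fin m)} (hρ : ρ ∉ K) (hρτ : ρ ⊂ τ) : ρ = σ :=
  compl_injective (huniq ρᶜ (compl_mem_alexDual.2 hρ) (compl_ssubset_compl.2 hρτ))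

end alexDual

theorem union_complex_and_dual_collapse_general {m : ℕ} (K : Set (Finset (Fin m)))
    (hK : IsComplex K) (σ τ : Finset (Fin m))
    (hσ : Finset.univ \ σ ∈ alexDual K)
    (hlt : Finset.univ \ τ ⊂ Finset.univ \ σ)
    (huniq : ∀ ρ ∈ alexDual K, Finset.univ \ τ ⊂ ρ → ρ = Finset.univ \ σ) :
    IsComplex (K ∪ {σ, τ}) ∧
      (σ ⊂ τ ∧ (∀ ρ ∈ K ∪ {σ, τ}, σ ⊂ ρ → ρ = τ) ∧ τ.card = σ.card + 1) ∧
      alexDual (K ∪ {σ, τ}) = alexDual K \ {Finset.univ \ σ, Finset.univ \ τ} := by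
  simp only [← compl_eq_univ_sdiff] at hσ hlt huniq ⊢
  have hσK : σ ∉ K := compl_mem_alexDual.1 hσ
  have hστ : σ ⊂ τ := compl_ssubset_compl.1 hlt
  have hgap : ∀ ρ ∉ K, ρ ⊂ τ → ρ = σ := fun ρ =>
    eq_of_notMem_of_ssubset_of_alexDual huniq
  refine ⟨hK.union_pair hστ.subset hgap,
    ⟨hστ, fun ρ => hK.eq_of_ssubset_of_mem_union_pair hσK, ?_⟩, alexDual_union_pair K σ τ⟩
  exact (Nat.covBy_iff_add_one_eq.1 (hK.covBy_of_forall_notMem hσK hστ hgap).card_finset).symm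

/-- Let `σ ⊆ τ ⊆ [m]` be such that `σ^∨ = [m]∖σ` and `τ^∨ = [m]∖τ` are faces of `K^∨` and
`σ^∨` is the unique face of `K^∨` properly containing `τ^∨`. Then (i) `K ∪ {σ, τ}` is a
simplicial complex; (ii) `τ` is the unique face of `K ∪ {σ, τ}` properly containing `σ`
and `|τ| = |σ| + 1`; (iii) `(K ∪ {σ, τ})^∨ = K^∨ ∖ {σ^∨, τ^∨}`, the elementary collapse of
`K^∨` at the free face `τ^∨`. -/
theorem union_complex_and_dual_collapse {m : ℕ} (K : Set (Finset (Fin m)))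
    (hK : IsComplex K) (σ τ : Finset (Fin m)) (hστ : σ ⊆ τ)
    (hσ : Finset.univ \ σ ∈ alexDual K) (hτ : Finset.univ \ τ ∈ alexDual K)
    (hlt : Finset.univ \ τ ⊂ Finset.univ \ σ)
    (huniq : ∀ ρ ∈ alexDual K, Finset.univ \ τ ⊂ ρ → ρ = Finset.univ \ σ) :
    IsComplex (K ∪ {σ, τ}) ∧
      (σ ⊂ τ ∧ (∀ ρ ∈ K ∪ {σ, τ}, σ ⊂ ρ → ρ = τ) ∧ τ.card = σ.card + 1) ∧
      alexDual (K ∪ {σ, τ}) = alexDual K \ {Finset.univ \ σ, Finset.univ \ τ} :=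
  union_complex_and_dual_collapse_general K hK σ τ hσ hlt huniq
end

section
/- Let L be a simplicial complex with at least one nonempty face, with a shelling F_1,…,F_t, and let S := {k ∈ {2,…,t} : every proper subset of F_k is contained in F_j for some j < k} be the set of indices of the spanning facets of the shelling. Then the simplicial complex L ∖ {F_k : k ∈ S} obtained by deleting the spanning facets is collapsible. -/
open Finset

/-- An elementary collapse of `L` removes a pair of faces `{τ, σ}` where `τ ⊊ σ` and `σ`
is the unique face of `L` properly containing `τ`. -/
def ElemCollapse {V : Type*} (L L' : Set (Finset V)) : Prop :=
  ∃ τ σ : Finset V, τ ∈ L ∧ σ ∈ L ∧ τ ⊂ σ ∧ (∀ ρ ∈ L, τ ⊂ ρ → ρ = σ) ∧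
    L' = L \ {τ, σ}

/-- `L` is collapsible: some finite sequence of elementary collapses transforms `L`
into the complex `{∅, {v}}` consisting of a single vertex `v`. -/
def Collapsible {V : Type*} (L : Set (Finset V)) : Prop :=
  ∃ v : V, Relation.ReflTransGen ElemCollapse L ({∅, {v}} : Set (Finset V))

/-!
Let `D n` be the complex generated by the first `n` facets, with the spanning facets removed.
Passing from `D k` to `D (k + 1)` adds nothing when `F_k` is spanning. Otherwise the new faces
form an interval `[R, F_k]` with `R ≠ F_k` (the restriction face of the shelling step), which
collapses away by pairing each `σ` with `insert x σ` for a fixed `x ∈ F_k \ R`. Hence `D t`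
collapses onto `D 1`, the full simplex on `F_0`, which collapses onto any of its vertices.
-/
section Collapsing
variable {V : Type*}

abbrev Collapses (C D : Set (Finset V)) : Prop := Relation.ReflTransGen ElemCollapse C D

variable [DecidableEq V]

theorem Finset.erase_eq_iff_of_notMem {x : V} {σ ρ : Finset V} (hx : x ∉ σ) :
    ρ.erase x = σ ↔ ρ = σ ∨ ρ = insert x σ := by
  constructor
  · rintro rfl
    by_cases hxρ : x ∈ ρ
    · exact .inr (insert_erase hxρ).symm
    · exact .inl (erase_eq_of_notMem hxρ).symm
  · rintro (rfl | rfl)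
    exacts [erase_eq_of_notMem hx, erase_insert hx]

theorem setOf_erase_mem_insert {x : V} {σ : Finset V} (hx : x ∉ σ) (T : Finset (Finset V)) :
    {ρ | ρ.erase x ∈ insert σ T} = {σ, insert x σ} ∪ {ρ | ρ.erase x ∈ T} := by
  ext ρ
  simp [Finset.erase_eq_iff_of_notMem hx, or_assoc]

/-- Pairs `(σ, insert x σ)` with `σ ∈ T` can be collapsed in order of decreasing size: when
`σ` has maximal size, `insert x σ` is its only proper coface left. -/
theorem collapses_sdiff_of_matching (x : V) (T : Finset (Finset V)) {C : Set (Finset V)}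
    (hx : ∀ σ ∈ T, x ∉ σ) (hmem : ∀ σ ∈ T, σ ∈ C ∧ insert x σ ∈ C)
    (hcofaces : ∀ σ ∈ T, ∀ ρ ∈ C, σ ⊂ ρ → ρ.erase x ∈ T) :
    Collapses C (C \ {ρ | ρ.erase x ∈ T}) := by
  induction T using Finset.induction_on_max_value (f := (Finset.card : Finset V → ℕ))
    generalizing C with
  | empty => simpa using .refl
  | insert σ T hσT hmax ih =>
    simp only [Finset.forall_mem_insert] at hx hmem hcofaces
    have hxσ := hx.1
    have hfree : ∀ ρ ∈ C, σ ⊂ ρ → ρ = insert x σ := by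
      intro ρ hρ hσρ
      have hsub : σ ⊆ ρ.erase x := Finset.subset_erase.2 ⟨hσρ.1, hxσ⟩
      have hρT := hcofaces.1 ρ hρ hσρ
      have hcard : (ρ.erase x).card ≤ σ.card := by
        rcases Finset.mem_insert.1 hρT with h | h
        · rw [h]
        · exact hmax _ h
      rcases (Finset.erase_eq_iff_of_notMem hxσ).1
        (Finset.eq_of_subset_of_card_le hsub hcard).symm with rfl | h
      · exact absurd hσρ (ssubset_irrefl _)
      · exact h
    have hstep : ElemCollapse C (C \ {σ, insert x σ}) :=
      ⟨σ, insert x σ, hmem.1.1, hmem.1.2, Finset.ssubset_insert hxσ, hfree, rfl⟩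
    rw [setOf_erase_mem_insert hxσ, ← Set.sdiff_sdiff]
    refine .head hstep (ih hx.2 (fun τ hτ => ?_) (fun τ hτ ρ hρ hτρ => ?_))
    · have hxτ := hx.2 τ hτ
      have hτσ : τ ≠ σ := ne_of_mem_of_not_mem hτ hσT
      refine ⟨⟨(hmem.2 τ hτ).1, ?_⟩, ⟨(hmem.2 τ hτ).2, ?_⟩⟩
      · rintro (rfl | h)
        exacts [hτσ rfl, hxτ (h ▸ Finset.mem_insert_self x σ)]
      · rintro (h | h)
        · exact hxσ (h ▸ Finset.mem_insert_self x τ)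
        · exact hτσ (by rw [← Finset.erase_insert hxτ, h, Finset.erase_insert hxσ])
    · refine (Finset.mem_insert.1 (hcofaces.2 τ hτ ρ hρ.1 hτρ)).resolve_left fun h => hρ.2 ?_
      exact (Finset.erase_eq_iff_of_notMem hxσ).1 h

theorem collapses_sdiff_interval {C : Set (Finset V)} {R G : Finset V} (hRG : R ⊂ G)
    (hint : ∀ σ, R ⊆ σ → σ ⊆ G → σ ∈ C) (hup : ∀ ρ ∈ C, R ⊆ ρ → ρ ⊆ G) :
    Collapses C (C \ {σ | R ⊆ σ ∧ σ ⊆ G}) := by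
  obtain ⟨x, hxG, hxR⟩ := Finset.exists_of_ssubset hRG
  set T := {σ ∈ G.powerset | R ⊆ σ ∧ x ∉ σ}
  have herase : ∀ ρ, ρ.erase x ∈ T ↔ R ⊆ ρ ∧ ρ ⊆ G := by
    intro ρ
    simp [T, Finset.subset_erase, hxR, Finset.erase_subset_iff_of_mem hxG, and_comm]
  have hT : ∀ σ ∈ T, σ ⊆ G ∧ R ⊆ σ ∧ x ∉ σ := by simp [T]
  have hcol := collapses_sdiff_of_matching x T (C := C) (fun σ hσ => (hT σ hσ).2.2)
    (fun σ hσ => ⟨hint σ (hT σ hσ).2.1 (hT σ hσ).1,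
      hint _ ((hT σ hσ).2.1.trans (Finset.subset_insert x σ))
        (Finset.insert_subset hxG (hT σ hσ).1)⟩)
    (fun σ hσ ρ hρ hσρ =>
      have hRρ := (hT σ hσ).2.1.trans hσρ.1
      (herase ρ).2 ⟨hRρ, hup ρ hρ hRρ⟩)
  simpa only [herase] using hcol

theorem collapses_simplex {G : Finset V} {v : V} (hv : v ∈ G) :
    Collapses {σ | σ ⊆ G} {∅, {v}} := by
  set T := {σ ∈ G.powerset | v ∉ σ ∧ σ.Nonempty}
  have hT : ∀ σ ∈ T, σ ⊆ G ∧ v ∉ σ ∧ σ.Nonempty := by simp [T]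
  have hcol := collapses_sdiff_of_matching v T (C := {σ | σ ⊆ G}) (fun σ hσ => (hT σ hσ).2.1)
    (fun σ hσ => ⟨(hT σ hσ).1, Finset.insert_subset hv (hT σ hσ).1⟩)
    (fun σ hσ ρ hρ hσρ => by
      obtain ⟨-, hvσ, hne⟩ := hT σ hσ
      simpa [T] using ⟨(Finset.erase_subset v ρ).trans hρ,
        hne.mono (Finset.subset_erase.2 ⟨hσρ.1, hvσ⟩)⟩)
  convert hcol using 1
  ext ρ
  constructor
  · rintro (rfl | rfl)
    exacts [⟨G.empty_subset, by simp [T]⟩, ⟨Finset.singleton_subset_iff.2 hv, by simp [T]⟩]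
  · rintro ⟨hρG, hρ⟩
    refine (Finset.erase_eq_empty_iff ρ v).1 (Finset.not_nonempty_iff_eq_empty.1 fun hne => hρ ?_)
    simpa [T] using ⟨(Finset.erase_subset v ρ).trans hρG, hne⟩
end Collapsing

/-- A face of `G` lying in `P` extends to a maximal one, which by `hmax` is some `G.erase y`;
so `R` consists of the `y ∈ G` with `G.erase y ∈ P`. -/
theorem exists_restriction {V : Type*} {P : Set (Finset V)} {G : Finset V}
    (hP : ∀ σ ∈ P, ∀ τ ⊆ σ, τ ∈ P)
    (hmax : ∀ σ, σ ⊆ G ∧ σ ∈ P → (∀ ρ, ρ ⊆ G ∧ ρ ∈ P → σ ⊆ ρ → σ = ρ) →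
      σ.card + 1 = G.card) :
    ∃ R ⊆ G, ∀ σ ⊆ G, σ ∉ P ↔ R ⊆ σ := by
  classical
  have hmem : ∀ σ ⊆ G, σ ∈ P ↔ ∃ y ∈ G, y ∉ σ ∧ G.erase y ∈ P := by
    refine fun σ hσG => ⟨fun hσP => ?_, fun ⟨y, _, hyσ, hy⟩ =>
      hP _ hy σ (Finset.subset_erase.2 ⟨hσG, hyσ⟩)⟩
    have hfin : {ρ | ρ ⊆ G ∧ ρ ∈ P}.Finite :=
      G.powerset.finite_toSet.subset fun ρ hρ => Finset.mem_powerset.2 hρ.1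
    obtain ⟨ρ, hσρ, hρ⟩ := hfin.exists_le_maximal ⟨hσG, hσP⟩
    have hcard := hmax ρ hρ.prop fun τ hτ hρτ => hρτ.antisymm (hρ.2 hτ hρτ)
    obtain ⟨y, hyG, hyρ⟩ := Finset.exists_mem_notMem_of_card_lt_card (s := ρ) (t := G) (by omega)
    have hρy : ρ = G.erase y := Finset.eq_of_subset_of_card_le
      (Finset.subset_erase.2 ⟨hρ.prop.1, hyρ⟩) (by rw [Finset.card_erase_of_mem hyG]; omega)
    exact ⟨y, hyG, fun hyσ => hyρ (hσρ hyσ), hρy ▸ hρ.prop.2⟩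
  refine ⟨{y ∈ G | G.erase y ∈ P}, Finset.filter_subset _ _, fun σ hσG => ?_⟩
  simp only [hmem σ hσG, Finset.subset_iff, Finset.mem_filter]
  grind

section Shelling
variable {V : Type*} (F : List (Finset V))

def prefixComplex (n : ℕ) : Set (Finset V) :=
  {σ | ∃ j : Fin F.length, (j : ℕ) < n ∧ σ ⊆ F.get j}

def spanningFacets : Set (Finset V) :=
  {G | ∃ k : Fin F.length, 1 ≤ (k : ℕ) ∧ (∀ σ ⊂ F.get k, σ ∈ prefixComplex F k) ∧ G = F.get k}

variable {F}

theorem prefixComplex_mono {m n : ℕ} (h : m ≤ n) : prefixComplex F m ⊆ prefixComplex F n :=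
  fun _ ⟨j, hj, hσ⟩ => ⟨j, hj.trans_le h, hσ⟩

theorem mem_prefixComplex_of_subset {n : ℕ} {σ τ : Finset V} (hσ : σ ∈ prefixComplex F n)
    (hτ : τ ⊆ σ) : τ ∈ prefixComplex F n :=
  let ⟨j, hj, hσj⟩ := hσ
  ⟨j, hj, hτ.trans hσj⟩

theorem mem_prefixComplex_succ {k : Fin F.length} {σ : Finset V} :
    σ ∈ prefixComplex F (k + 1) ↔ σ ∈ prefixComplex F k ∨ σ ⊆ F.get k := by
  constructor
  · rintro ⟨j, hj, hσ⟩
    rcases Nat.lt_succ_iff_lt_or_eq.1 hj with hj | hj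
    · exact .inl ⟨j, hj, hσ⟩
    · exact .inr (Fin.ext hj ▸ hσ)
  · rintro (hσ | hσ)
    exacts [prefixComplex_mono k.val.le_succ hσ, ⟨k, k.val.lt_succ_self, hσ⟩]

theorem prefixComplex_succ_sdiff_of_spanning {k : Fin F.length} (hk : 1 ≤ (k : ℕ))
    (hsp : ∀ σ ⊂ F.get k, σ ∈ prefixComplex F k) :
    prefixComplex F (k + 1) \ spanningFacets F = prefixComplex F k \ spanningFacets F := by
  ext σ
  simp only [Set.mem_sdiff, mem_prefixComplex_succ, and_congr_left_iff, or_iff_left_iff_imp]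
  intro hσS hσk
  rcases hσk.eq_or_ssubset with rfl | hσk
  exacts [absurd ⟨k, hk, hsp, rfl⟩ hσS, hsp σ hσk]

namespace IsShelling
variable {K : Set (Finset V)} (hF : IsShelling K F)
include hF

theorem eq_of_get_subset {j k : Fin F.length} (h : F.get j ⊆ F.get k) : j = k := by
  have hfacet : ∀ i, IsFacet K (F.get i) := fun i => (hF.2.1 _).1 (List.get_mem F i)
  exact (hF.1.get_inj_iff).1 ((hfacet j).2 _ (hfacet k).1 h)

theorem spanning_of_mem_spanningFacets {k : Fin F.length} {σ : Finset V}
    (hσ : σ ∈ spanningFacets F) (hσk : σ ⊆ F.get k) :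
    1 ≤ (k : ℕ) ∧ ∀ τ ⊂ F.get k, τ ∈ prefixComplex F k := by
  obtain ⟨j, hj, hsp, rfl⟩ := hσ
  obtain rfl := hF.eq_of_get_subset hσk
  exact ⟨hj, hsp⟩

theorem prefixComplex_length [Finite V] (hK : IsComplex K) : prefixComplex F F.length = K := by
  have hfacet : ∀ G, G ∈ F ↔ IsFacet K G := hF.2.1
  ext σ
  constructor
  · rintro ⟨j, -, hσj⟩
    exact hK.2 _ ((hfacet _).1 (List.get_mem F j)).1 σ hσj
  · intro hσ
    obtain ⟨G, hσG, hG⟩ := Finite.exists_le_maximal (p := (· ∈ K)) hσ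
    obtain ⟨j, rfl⟩ := List.mem_iff_get.1 <|
      (hfacet G).2 ⟨hG.prop, fun H hH hGH => hGH.antisymm (hG.2 hH hGH)⟩
    exact ⟨j, j.isLt, hσG⟩

theorem prefixComplex_one_sdiff (h0 : 0 < F.length) :
    prefixComplex F 1 \ spanningFacets F = {σ | σ ⊆ F.get ⟨0, h0⟩} := by
  ext σ
  constructor
  · rintro ⟨⟨j, hj, hσ⟩, -⟩
    obtain rfl : j = ⟨0, h0⟩ := Fin.ext (Nat.lt_one_iff.1 hj)
    exact hσ
  · intro hσ
    exact ⟨⟨⟨0, h0⟩, one_pos, hσ⟩, fun hS => absurd (hF.spanning_of_mem_spanningFacets hS hσ).1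
      (by simp)⟩

variable [DecidableEq V]

theorem collapses_succ_of_not_spanning {k : Fin F.length} (hk : 1 ≤ (k : ℕ))
    (hsp : ∃ τ ⊂ F.get k, τ ∉ prefixComplex F k) :
    Collapses (prefixComplex F (k + 1) \ spanningFacets F)
      (prefixComplex F k \ spanningFacets F) := by
  obtain ⟨τ, hτk, hτ⟩ := hsp
  obtain ⟨R, hRk, hR⟩ := exists_restriction (fun σ hσ τ hτ => mem_prefixComplex_of_subset hσ hτ)
    (hF.2.2 k hk).2
  have hnew : ∀ σ, R ⊆ σ → σ ∉ prefixComplex F k :=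
    fun σ hRσ hσ => (hR R hRk).2 subset_rfl (mem_prefixComplex_of_subset hσ hRσ)
  have hRτ : R ⊂ F.get k := ((hR τ hτk.1).1 hτ).trans_ssubset hτk
  convert collapses_sdiff_interval hRτ (fun σ hRσ hσk => ?_) (fun ρ hρ hRρ => ?_) using 1
  · ext σ
    simp only [Set.mem_sdiff, mem_prefixComplex_succ, Set.mem_ofPred_eq]
    constructor
    · rintro ⟨hσ, hσS⟩
      exact ⟨⟨.inl hσ, hσS⟩, fun ⟨hRσ, _⟩ => hnew σ hRσ hσ⟩
    · rintro ⟨⟨hσ | hσk, hσS⟩, hσR⟩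
      · exact ⟨hσ, hσS⟩
      · exact ⟨not_not.1 fun hσ => hσR ⟨(hR σ hσk).1 hσ, hσk⟩, hσS⟩
  · refine ⟨mem_prefixComplex_succ.2 (.inr hσk), fun hσS => ?_⟩
    exact hτ ((hF.spanning_of_mem_spanningFacets hσS hσk).2 τ hτk)
  · exact (mem_prefixComplex_succ.1 hρ.1).resolve_left (hnew ρ hRρ)

theorem collapses_succ {k : Fin F.length} (hk : 1 ≤ (k : ℕ)) :
    Collapses (prefixComplex F (k + 1) \ spanningFacets F)
      (prefixComplex F k \ spanningFacets F) := by
  by_cases hsp : ∀ σ ⊂ F.get k, σ ∈ prefixComplex F k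
  · rw [prefixComplex_succ_sdiff_of_spanning hk hsp]
  · exact hF.collapses_succ_of_not_spanning hk (by simpa using hsp)

theorem collapses_prefixComplex_one {n : ℕ} (hn : 1 ≤ n) (hnF : n ≤ F.length) :
    Collapses (prefixComplex F n \ spanningFacets F) (prefixComplex F 1 \ spanningFacets F) := by
  induction n, hn using Nat.le_induction with
  | base => exact .refl
  | succ n hn ih => exact (hF.collapses_succ (k := ⟨n, hnF⟩) hn).trans (ih (by omega))

end IsShelling
end Shelling

theorem deleteSpanningFacets_collapsible_general {V : Type*} [Fintype V]
    (L : Set (Finset V)) (hL : IsComplex L) (hne : ∃ σ ∈ L, σ ≠ ∅)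
    (F : List (Finset V)) (hF : IsShelling L F) :
    Collapsible (L \ {G | ∃ k : Fin F.length, 1 ≤ (k : ℕ) ∧
      (∀ σ ⊂ F.get k, ∃ j : Fin F.length, (j : ℕ) < (k : ℕ) ∧ σ ⊆ F.get j) ∧
      G = F.get k}) := by
  classical
  obtain ⟨σ, hσL, hσ⟩ := hne
  obtain ⟨j, -, hσj⟩ : σ ∈ prefixComplex F F.length := (hF.prefixComplex_length hL).symm ▸ hσL
  have h0 : 0 < F.length := j.pos
  obtain ⟨v, hv⟩ : (F.get ⟨0, h0⟩).Nonempty := by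
    refine Finset.nonempty_iff_ne_empty.2 fun h => hσ (Finset.subset_empty.1 ?_)
    obtain rfl := hF.eq_of_get_subset (k := j) (h ▸ Finset.empty_subset _)
    exact h ▸ hσj
  refine ⟨v, ?_⟩
  change Collapses (L \ spanningFacets F) _
  rw [← hF.prefixComplex_length hL]
  exact (hF.collapses_prefixComplex_one h0 le_rfl).trans
    (hF.prefixComplex_one_sdiff h0 ▸ collapses_simplex hv)

/-- Let `L` be a simplicial complex with at least one nonempty face and with a shelling
`F_1, …, F_t`, and let `S` be the set of indices `k ≥ 2` (0-indexed: `k ≥ 1`) of the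
spanning facets of the shelling, i.e. those `F_k` all of whose proper subsets are
contained in some earlier `F_j`. Then the complex obtained from `L` by deleting the
spanning facets is collapsible. -/
theorem deleteSpanningFacets_collapsible {V : Type*} [DecidableEq V] [Fintype V]
    (L : Set (Finset V)) (hL : IsComplex L) (hne : ∃ σ ∈ L, σ ≠ ∅)
    (F : List (Finset V)) (hF : IsShelling L F) :
    Collapsible (L \ {G | ∃ k : Fin F.length, 1 ≤ (k : ℕ) ∧
      (∀ σ ⊂ F.get k, ∃ j : Fin F.length, (j : ℕ) < (k : ℕ) ∧ σ ⊆ F.get j) ∧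
      G = F.get k}) :=
  deleteSpanningFacets_collapsible_general L hL hne F hF
end

section
/- Let I and J be disjoint finite index sets, let K₁ be a simplicial complex on I and K₂ a simplicial complex on J, and let K₁ * K₂ := {σ ∪ τ : σ ∈ K₁, τ ∈ K₂} be their join, a simplicial complex on I ∪ J. For each i ∈ I ∪ J let (X_i, A_i) be a pair of topological spaces with A_i ⊆ X_i. Then the map x ↦ (x|_I, x|_J) is a homeomorphism from the polyhedral product Z_{K₁*K₂}(X, A) onto the product Z_{K₁}(X_I, A_I) × Z_{K₂}(X_J, A_J). -/
open Finset

/-- The polyhedral product `Z_K(X, A)`: the set of points `x` of the product `∏ v, X v`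
such that, for some face `σ ∈ K`, `x v ∈ A v` for every `v ∉ σ`. -/
def polyProd {V : Type*} (K : Set (Finset V)) (X : V → Type*) (A : ∀ v, Set (X v)) :
    Set (∀ v, X v) :=
  {x | ∃ σ ∈ K, ∀ v ∉ σ, x v ∈ A v}

/-- The join `K₁ * K₂` of simplicial complexes on disjoint vertex sets (modelled by the
sum type): faces are unions `σ₁ ∪ σ₂` with `σ₁ ∈ K₁` and `σ₂ ∈ K₂`. -/
def joinComplex {ι₁ ι₂ : Type*} [DecidableEq ι₁] [DecidableEq ι₂]
    (K₁ : Set (Finset ι₁)) (K₂ : Set (Finset ι₂)) : Set (Finset (ι₁ ⊕ ι₂)) :=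
  {σ | ∃ σ₁ ∈ K₁, ∃ σ₂ ∈ K₂,
    σ = σ₁.map ⟨Sum.inl, Sum.inl_injective⟩ ∪ σ₂.map ⟨Sum.inr, Sum.inr_injective⟩}

/-- For simplicial complexes `K₁`, `K₂` on disjoint finite index sets and pairs
`(X_v, A_v)` of spaces with `A_v ⊆ X_v`, the restriction map `x ↦ (x|_I, x|_J)` is a
homeomorphism from `Z_{K₁*K₂}(X, A)` onto `Z_{K₁}(X_I, A_I) × Z_{K₂}(X_J, A_J)`. -/
theorem polyProd_join_homeomorph {ι₁ ι₂ : Type*} [Fintype ι₁] [Fintype ι₂]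
    [DecidableEq ι₁] [DecidableEq ι₂]
    (K₁ : Set (Finset ι₁)) (K₂ : Set (Finset ι₂))
    (hK₁ : IsComplex K₁) (hK₂ : IsComplex K₂)
    (X : ι₁ ⊕ ι₂ → Type*) [∀ v, TopologicalSpace (X v)] (A : ∀ v, Set (X v)) :
    ∃ e : ↥(polyProd (joinComplex K₁ K₂) X A) ≃ₜ
        ↥(polyProd K₁ (fun i => X (Sum.inl i)) fun i => A (Sum.inl i)) ×
        ↥(polyProd K₂ (fun j => X (Sum.inr j)) fun j => A (Sum.inr j)),
      ∀ x, ((e x).1).val = (fun i => x.val (Sum.inl i)) ∧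
        ((e x).2).val = (fun j => x.val (Sum.inr j)) := by
  -- the ambient homeomorphism
  let e₀ : (∀ v, X v) ≃ₜ (∀ i, X (Sum.inl i)) × (∀ j, X (Sum.inr j)) :=
    { toEquiv := Equiv.sumPiEquivProdPi X
      continuous_toFun := by
        apply Continuous.prodMk <;> exact continuous_pi fun _ => continuous_apply _
      continuous_invFun := by
        apply continuous_pi
        rintro (i | j)
        · exact (continuous_apply i).comp continuous_fst
        · exact (continuous_apply j).comp continuous_snd }
  have himg : e₀ '' polyProd (joinComplex K₁ K₂) X A =
      (polyProd K₁ (fun i => X (Sum.inl i)) fun i => A (Sum.inl i)) ×ˢ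
      (polyProd K₂ (fun j => X (Sum.inr j)) fun j => A (Sum.inr j)) := by
    ext p
    constructor
    · rintro ⟨x, ⟨σ, ⟨σ₁, h₁, σ₂, h₂, rfl⟩, hx⟩, rfl⟩
      constructor
      · exact ⟨σ₁, h₁, fun i hi => hx (Sum.inl i) (by simp [hi])⟩
      · exact ⟨σ₂, h₂, fun j hj => hx (Sum.inr j) (by simp [hj])⟩
    · rintro ⟨⟨σ₁, h₁, hx₁⟩, ⟨σ₂, h₂, hx₂⟩⟩
      refine ⟨(Equiv.sumPiEquivProdPi X).symm p, ⟨_, ⟨σ₁, h₁, σ₂, h₂, rfl⟩, ?_⟩,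
        (Equiv.sumPiEquivProdPi X).apply_symm_apply p⟩
      rintro (i | j) hv
      · exact hx₁ i (by simpa using hv)
      · exact hx₂ j (by simpa using hv)
  refine ⟨(e₀.image _).trans ((Homeomorph.setCongr himg).trans (Homeomorph.Set.prod _ _)),
    fun x => ⟨rfl, rfl⟩⟩
end
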